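/- arXiv:2406.12205 — 4 statements merged into one kernel-verified Lean document; each statement's English description precedes it below -/
import Mathlib

section
/- Worst-case upper bound for RL-LOW (Proposition 3): There exists a constant C > 0 depending only on L such that for every consistent offline RLHF instance v and every sample size n ≥ 1 with n·N_{k,i,j} ∈ ℕ for all (k,i,j), and for every measurable choice of î_k ∈ Î_k, the expected simple regret of RL-LOW satisfies E[R_n] ≤ C·n^{−1/2}·Σ_{k∈𝒮, i≠i*_k} ρ_k·(√(γ_{k,i}) + γ̃_{k,i}), where γ̃_{k,i} = Σ_{(k',i',j'):N_{k',i',j'}>0} |w^{(k,i,i*_k)}_{k',i',j'}|/√(N_{k',i',j'}). -/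
open MeasureTheory ProbabilityTheory Real

namespace RLHF

/-- The logistic sigmoid function. -/
noncomputable def sigmoid (x : ℝ) : ℝ := Real.exp x / (1 + Real.exp x)

/-- Clipping to the interval `[1/(1+e^{2L}), e^{2L}/(1+e^{2L})]`. -/
noncomputable def clip (L x : ℝ) : ℝ :=
  max (1 / (1 + Real.exp (2 * L))) (min (Real.exp (2 * L) / (1 + Real.exp (2 * L))) x)

/-- The logit (log-odds) function. -/
noncomputable def logit (x : ℝ) : ℝ := Real.log (x / (1 - x))

/-- An offline RLHF instance: state distribution, feature map, parameter vector and
sampling proportions. -/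
structure Inst (S A d : ℕ) where
  ρ : Fin S → ℝ
  φ : Fin S → Fin A → EuclideanSpace ℝ (Fin d)
  θ : EuclideanSpace ℝ (Fin d)
  N : Fin S → Fin A → Fin A → ℝ
  ρ_pos : ∀ k, 0 < ρ k
  ρ_sum : ∑ k, ρ k = 1
  N_nonneg : ∀ k i j, 0 ≤ N k i j
  N_sum : ∑ k, ∑ i, ∑ j, N k i j = 1
  φ_ne : ∀ k i j, i ≠ j → φ k i ≠ φ k j

namespace Inst

variable {S A d : ℕ}

/-- The reward of action `i` in state `k`. -/
noncomputable def r (v : Inst S A d) (k : Fin S) (i : Fin A) : ℝ :=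
  @inner ℝ _ _ (v.φ k i) v.θ

/-- The span of the sampled feature differences. -/
def W (v : Inst S A d) : Submodule ℝ (EuclideanSpace ℝ (Fin d)) :=
  Submodule.span ℝ {x | ∃ k i j, 0 < v.N k i j ∧ x = v.φ k i - v.φ k j}

/-- Consistency of an instance. -/
def Consistent (v : Inst S A d) : Prop :=
  ∀ k i j, v.φ k i - v.φ k j ∈ v.W

/-- `istar` assigns to each state its unique best action. -/
def BestAction (v : Inst S A d) (istar : Fin S → Fin A) : Prop :=
  ∀ k j, j ≠ istar k → v.r k j < v.r k (istar k)

/-- The suboptimality gap. -/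
noncomputable def gap (v : Inst S A d) (istar : Fin S → Fin A) (k : Fin S) (i : Fin A) : ℝ :=
  v.r k (istar k) - v.r k i

/-- The objective value of a candidate weight vector. -/
noncomputable def cost (v : Inst S A d) (u : Fin S → Fin A → Fin A → ℝ) : ℝ :=
  ∑ k', ∑ i', ∑ j', if 0 < v.N k' i' j' then (u k' i' j') ^ 2 / v.N k' i' j' else 0

/-- Feasibility of a weight vector for the pair `(i,j)` in state `k`: it vanishes where
`N` vanishes and expresses `φ(k,i) − φ(k,j)` as a linear combination of sampled feature
differences. -/
def Feasible (v : Inst S A d) (k : Fin S) (i j : Fin A)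
    (u : Fin S → Fin A → Fin A → ℝ) : Prop :=
  (∀ k' i' j', v.N k' i' j' = 0 → u k' i' j' = 0) ∧
  v.φ k i - v.φ k j = ∑ k', ∑ i', ∑ j', u k' i' j' • (v.φ k' i' - v.φ k' j')

/-- `w` is a locally optimal weight vector for `(k,i,j)`. -/
def IsLOW (v : Inst S A d) (k : Fin S) (i j : Fin A)
    (w : Fin S → Fin A → Fin A → ℝ) : Prop :=
  v.Feasible k i j w ∧ ∀ u, v.Feasible k i j u → v.cost w ≤ v.cost u

/-- `γ̃_{k,i}`-type quantity: weighted sum of absolute weights over `1/√N`. -/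
noncomputable def gammaTilde (v : Inst S A d) (u : Fin S → Fin A → Fin A → ℝ) : ℝ :=
  ∑ k', ∑ i', ∑ j',
    if 0 < v.N k' i' j' then |u k' i' j'| / Real.sqrt (v.N k' i' j') else 0

/-- `γ^DP`-type quantity. -/
noncomputable def gammaDP (v : Inst S A d) (u : Fin S → Fin A → Fin A → ℝ) : ℝ :=
  ∑ k', ∑ i', ∑ j',
    if 0 < v.N k' i' j' then (u k' i' j' / v.N k' i' j') ^ 2 else 0

/-- `γ̃^DP`-type quantity. -/
noncomputable def gammaTildeDP (v : Inst S A d) (u : Fin S → Fin A → Fin A → ℝ) : ℝ :=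
  ∑ k', ∑ i', ∑ j',
    if 0 < v.N k' i' j' then |u k' i' j'| / v.N k' i' j' else 0

/-- The hardness parameter `H(v)`, where `w k i j` denotes the locally optimal weights
for the triple `(k,i,j)`. -/
noncomputable def H (v : Inst S A d) (istar : Fin S → Fin A)
    (w : Fin S → Fin A → Fin A → Fin S → Fin A → Fin A → ℝ) : ℝ :=
  sSup {x | ∃ k i, i ≠ istar k ∧
    x = v.cost (w k i (istar k)) / (v.gap istar k i) ^ 2}

/-- The DP hardness parameter `H_DP^{(ε,δ)}(v)`. -/
noncomputable def HDP (v : Inst S A d) (istar : Fin S → Fin A)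
    (w : Fin S → Fin A → Fin A → Fin S → Fin A → Fin A → ℝ) (ε δ : ℝ) : ℝ :=
  sSup {x | ∃ k i, i ≠ istar k ∧
    x = Real.sqrt (Real.log (1.25 / δ) * v.gammaDP (w k i (istar k))) /
        (Real.sqrt ε * v.gap istar k i)}

/-- The empirical success proportion `B_{k,i,j}` computed from counts `y`. -/
noncomputable def B (v : Inst S A d) (n : ℕ) (y : Fin S → Fin A → Fin A → ℕ)
    (k : Fin S) (i j : Fin A) : ℝ :=
  if 0 < v.N k i j then (y k i j : ℝ) / (n * v.N k i j) else 0

/-- The RL-LOW relative reward estimate `r̂_{k,i,j}` computed from counts `y`. -/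
noncomputable def rhat (v : Inst S A d) (L : ℝ) (n : ℕ)
    (w : Fin S → Fin A → Fin A → Fin S → Fin A → Fin A → ℝ)
    (y : Fin S → Fin A → Fin A → ℕ) (k : Fin S) (i j : Fin A) : ℝ :=
  if i = j then 0 else
    ∑ k', ∑ i', ∑ j', w k i j k' i' j' * logit (clip L (v.B n y k' i' j'))

/-- The DP-RL-LOW private relative reward estimate `r̃_{k,i,j}` computed from counts `y`
and Gaussian noise realizations `z`. -/
noncomputable def rtilde (v : Inst S A d) (L : ℝ) (n : ℕ)
    (w : Fin S → Fin A → Fin A → Fin S → Fin A → Fin A → ℝ)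
    (y : Fin S → Fin A → Fin A → ℕ) (z : Fin S → Fin A → Fin A → ℝ)
    (k : Fin S) (i j : Fin A) : ℝ :=
  if i = j then 0 else
    ∑ k', ∑ i', ∑ j', w k i j k' i' j' *
      logit (clip L
        (if 0 < v.N k' i' j' then
          (y k' i' j' : ℝ) / (n * v.N k' i' j') + z k' i' j' else 0))

/-- Simple regret of the action assignment `ihat` (using the best actions `istar`). -/
noncomputable def regret (v : Inst S A d) (istar : Fin S → Fin A)
    (ihat : Fin S → Fin A) : ℝ :=
  ∑ k, v.ρ k * (v.r k (istar k) - v.r k (ihat k))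

/-- Simple regret of the action assignment `ihat` (via suprema of rewards; this does not
require the best action to be unique). -/
noncomputable def regretSup (v : Inst S A d) (ihat : Fin S → Fin A) : ℝ :=
  ∑ k, v.ρ k * ((⨆ j, v.r k j) - v.r k (ihat k))

end Inst

/-- `Y` has the binomial law with `m` trials and success probability `p` under `P`. -/
def HasBinomialLaw {Ω : Type*} [MeasurableSpace Ω] (P : Measure Ω)
    (Y : Ω → ℕ) (m : ℕ) (p : ℝ) : Prop :=
  ∀ t : ℕ, P {ω | Y ω = t} =
    ENNReal.ofReal ((m.choose t : ℝ) * p ^ t * (1 - p) ^ (m - t))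

/-- The data model of offline RLHF with pairwise comparisons: for each triple `(k,i,j)`
with `N_{k,i,j} > 0`, the count `Y k i j` is binomial with `n·N_{k,i,j}` trials and
success probability `σ(r_{k,i} − r_{k,j})`, and these counts are independent. -/
def IsBTLSample {S A d : ℕ} (v : Inst S A d) (n : ℕ) {Ω : Type*} [MeasurableSpace Ω]
    (P : Measure Ω) (Y : Fin S → Fin A → Fin A → Ω → ℕ) : Prop :=
  (∀ k i j, Measurable (Y k i j)) ∧
  (∀ k i j, 0 < v.N k i j →
    HasBinomialLaw P (Y k i j) ⌈(n : ℝ) * v.N k i j⌉₊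
      (sigmoid (v.r k i - v.r k j))) ∧
  iIndepFun
    (fun (t : {t : Fin S × Fin A × Fin A // 0 < v.N t.1 t.2.1 t.2.2}) =>
      fun ω => (Y t.1.1 t.1.2.1 t.1.2.2 ω : ℝ)) P

/-- The data model of DP-RL-LOW: on top of the BTL counts, for each triple with
`N_{k,i,j} > 0` there is Gaussian noise `ξ k i j` of mean `0` and variance
`2·log(1.25/δ)/(ε·n·N_{k,i,j})²`, and all counts and noises are jointly independent. -/
def IsDPSample {S A d : ℕ} (v : Inst S A d) (n : ℕ) (ε δ : ℝ) {Ω : Type*}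
    [MeasurableSpace Ω] (P : Measure Ω)
    (Y : Fin S → Fin A → Fin A → Ω → ℕ) (ξ : Fin S → Fin A → Fin A → Ω → ℝ) : Prop :=
  (∀ k i j, Measurable (Y k i j)) ∧
  (∀ k i j, Measurable (ξ k i j)) ∧
  (∀ k i j, 0 < v.N k i j →
    HasBinomialLaw P (Y k i j) ⌈(n : ℝ) * v.N k i j⌉₊
      (sigmoid (v.r k i - v.r k j))) ∧
  (∀ k i j, 0 < v.N k i j →
    P.map (ξ k i j) =
      gaussianReal 0
        (Real.toNNReal (2 * Real.log (1.25 / δ) / (ε * n * v.N k i j) ^ 2))) ∧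
  iIndepFun
    (fun (t : {t : Fin S × Fin A × Fin A // 0 < v.N t.1 t.2.1 t.2.2} ⊕
              {t : Fin S × Fin A × Fin A // 0 < v.N t.1 t.2.1 t.2.2}) =>
      Sum.elim
        (fun t => fun ω => (Y t.1.1 t.1.2.1 t.1.2.2 ω : ℝ))
        (fun t => ξ t.1.1 t.1.2.1 t.1.2.2) t) P

end RLHF

open RLHF

/-! If RL-LOW picks a suboptimal action `i` in state `k`, then `r̂_{k,i,i*} ≥ 0`, while
feasibility of the weights `w = w^{(k,i,i*)}` gives
`r_{k,i} - r_{k,i*} = Σ w_{k',i',j'} (r_{k',i'} - r_{k',j'})`. Hence the gap is at most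
`Σ |w_{k',i',j'}| |logit (clip B_{k',i',j'}) - (r_{k',i'} - r_{k',j'})|`. Because `|r| ≤ L`,
the true preference probability `σ(r_{k',i'} - r_{k',j'})` lies in the clipping interval
`[σ(-2L), σ(2L)]`; clipping only moves `B` towards it, and on it `logit` is
`2 (1 + e^{2L})`-Lipschitz. A binomial proportion with `m = n N_{k',i',j'}` trials satisfies
`E |B - p| ≤ √(p (1 - p) / m) ≤ 1 / (2 √m)`, so `E[R_n] ≤ (1 + e^{2L}) n^{-1/2} Σ ρ_k γ̃_{k,i}`. -/

namespace RLHF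

open Finset

lemma sigmoid_eq_real_sigmoid (x : ℝ) : sigmoid x = Real.sigmoid x := by
  rw [sigmoid, Real.sigmoid_def, Real.exp_neg]
  field_simp
  ring

lemma clip_eq_max_min_sigmoid (L x : ℝ) :
    clip L x = max (Real.sigmoid (-(2 * L))) (min (Real.sigmoid (2 * L)) x) := by
  rw [clip, ← sigmoid_eq_real_sigmoid, ← sigmoid_eq_real_sigmoid, sigmoid, sigmoid, Real.exp_neg]
  congr 1
  field_simp
  ring

lemma logit_real_sigmoid (x : ℝ) : logit (Real.sigmoid x) = x := by
  rw [logit, ← Real.sigmoid_neg, ← Real.sigmoid_mul_rexp_neg,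
    div_mul_cancel_left₀ (Real.sigmoid_pos x).ne', Real.log_inv, Real.log_exp, neg_neg]

lemma abs_max_min_sub_le {lo hi p : ℝ} (hlo : lo ≤ p) (hhi : p ≤ hi) (x : ℝ) :
    |max lo (min hi x) - p| ≤ |x - p| := by
  grind

lemma abs_log_sub_log_le {c a b : ℝ} (hc : 0 < c) (ha : c ≤ a) (hb : c ≤ b) :
    |Real.log a - Real.log b| ≤ |a - b| / c := by
  wlog hba : b ≤ a generalizing a b
  · rw [abs_sub_comm, abs_sub_comm a]
    exact this hb ha (le_of_not_ge hba)
  have ha0 : 0 < a := hc.trans_le ha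
  have hb0 : 0 < b := hc.trans_le hb
  rw [abs_of_nonneg (sub_nonneg.2 (Real.log_le_log hb0 hba)), abs_of_nonneg (sub_nonneg.2 hba),
    ← Real.log_div ha0.ne' hb0.ne']
  calc Real.log (a / b) ≤ a / b - 1 := Real.log_le_sub_one_of_pos (div_pos ha0 hb0)
    _ = (a - b) / b := by field_simp
    _ ≤ (a - b) / c := div_le_div_of_nonneg_left (sub_nonneg.2 hba) hc hb

lemma abs_logit_sub_logit_le {c a b : ℝ} (hc : 0 < c) (ha : c ≤ a) (ha' : c ≤ 1 - a)
    (hb : c ≤ b) (hb' : c ≤ 1 - b) : |logit a - logit b| ≤ 2 / c * |a - b| := by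
  have hlogit {t : ℝ} (ht : c ≤ t) (ht' : c ≤ 1 - t) :
      logit t = Real.log t - Real.log (1 - t) :=
    Real.log_div (hc.trans_le ht).ne' (hc.trans_le ht').ne'
  calc |logit a - logit b|
      = |(Real.log a - Real.log b) - (Real.log (1 - a) - Real.log (1 - b))| := by
        rw [hlogit ha ha', hlogit hb hb']; ring_nf
    _ ≤ |Real.log a - Real.log b| + |Real.log (1 - a) - Real.log (1 - b)| := abs_sub _ _
    _ ≤ |a - b| / c + |(1 - a) - (1 - b)| / c :=
        add_le_add (abs_log_sub_log_le hc ha hb) (abs_log_sub_log_le hc ha' hb')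
    _ = 2 / c * |a - b| := by
        rw [show (1 - a) - (1 - b) = -(a - b) by ring, abs_neg]; ring

lemma abs_logit_clip_sub_le {L r : ℝ} (hr : |r| ≤ 2 * L) (b : ℝ) :
    |logit (clip L b) - r| ≤ 2 * (1 + Real.exp (2 * L)) * |b - sigmoid r| := by
  set c := Real.sigmoid (-(2 * L))
  have hc : 0 < c := Real.sigmoid_pos _
  have h_one_sub (t : ℝ) : 1 - t = c + (Real.sigmoid (2 * L) - t) := by
    rw [show c = 1 - Real.sigmoid (2 * L) from Real.sigmoid_neg _]; ring
  have hL : -(2 * L) ≤ 2 * L := by linarith [abs_nonneg r]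
  obtain ⟨hr₁, hr₂⟩ := abs_le.1 hr
  have hσ₁ : c ≤ Real.sigmoid r := Real.sigmoid_le hr₁
  have hσ₂ : Real.sigmoid r ≤ Real.sigmoid (2 * L) := Real.sigmoid_le hr₂
  have hclip₁ : c ≤ clip L b := by rw [clip_eq_max_min_sigmoid]; exact le_max_left _ _
  have hclip₂ : clip L b ≤ Real.sigmoid (2 * L) := by
    rw [clip_eq_max_min_sigmoid]; exact max_le (Real.sigmoid_le hL) (min_le_left _ _)
  have hinv : 2 / c = 2 * (1 + Real.exp (2 * L)) := by
    simp only [c, div_eq_mul_inv, Real.sigmoid_def, neg_neg, inv_inv]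
  rw [sigmoid_eq_real_sigmoid, ← hinv]
  calc |logit (clip L b) - r| = |logit (clip L b) - logit (Real.sigmoid r)| := by
        rw [logit_real_sigmoid]
    _ ≤ 2 / c * |clip L b - Real.sigmoid r| :=
        abs_logit_sub_logit_le hc hclip₁ (by rw [h_one_sub]; linarith) hσ₁
          (by rw [h_one_sub]; linarith)
    _ ≤ 2 / c * |b - Real.sigmoid r| :=
        mul_le_mul_of_nonneg_left (clip_eq_max_min_sigmoid L b ▸ abs_max_min_sub_le hσ₁ hσ₂ b)
          (div_pos two_pos hc).le

lemma sum_abs_div_sub_mul_bernstein_le {m : ℕ} (hm : m ≠ 0) (x : unitInterval) :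
    ∑ k : Fin (m + 1), |(k : ℝ) / m - x| * bernstein m k x ≤ 1 / (2 * √m) := by
  have hm0 : (0 : ℝ) < m := by positivity
  -- Cauchy–Schwarz against the Bernstein weights, then their variance identity.
  have hsq : (∑ k : Fin (m + 1), |(k : ℝ) / m - x| * bernstein m k x) ^ 2 ≤ 1 / (4 * m) :=
    calc _ ≤ (∑ k : Fin (m + 1), ((x : ℝ) - k / m) ^ 2 * bernstein m k x) *
          ∑ k : Fin (m + 1), bernstein m k x :=
          sum_sq_le_sum_mul_sum_of_sq_le_mul _ (fun _ _ => by positivity)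
            (fun _ _ => by positivity) fun _ _ => by rw [mul_pow, sq_abs]; exact le_of_eq (by ring)
      _ = (x : ℝ) * (1 - x) / m := by
          simpa [bernstein.z] using bernstein.variance hm x
      _ ≤ 1 / (4 * m) := by
          rw [div_le_div_iff₀ hm0 (by positivity)]
          nlinarith [sq_nonneg ((x : ℝ) - 1 / 2)]
  have hrhs : (1 / (2 * √m)) ^ 2 = 1 / (4 * m) := by
    rw [div_pow, mul_pow, Real.sq_sqrt hm0.le]; norm_num
  exact le_of_sq_le_sq (hrhs ▸ hsq) (by positivity)

section Binomial

-- The binomial weights are the Bernstein basis values `bernstein m k x`, hence `x : unitInterval`.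
variable {Ω : Type*} [MeasurableSpace Ω] {P : Measure Ω} {Y : Ω → ℕ} {m : ℕ} {x : unitInterval}

lemma HasBinomialLaw.ae_le (hY : HasBinomialLaw P Y m x) : ∀ᵐ ω ∂P, Y ω ≤ m := by
  rw [ae_iff]
  have hsub : {ω | ¬ Y ω ≤ m} ⊆ ⋃ t : ℕ, {ω | Y ω = m + 1 + t} := fun ω (hω : ¬ Y ω ≤ m) =>
    Set.mem_iUnion.2 ⟨Y ω - (m + 1), show Y ω = _ by omega⟩
  refine measure_mono_null hsub (measure_iUnion_null fun t => ?_)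
  rw [hY, Nat.choose_eq_zero_of_lt (by omega)]
  simp

lemma HasBinomialLaw.measureReal_eq (hY : HasBinomialLaw P Y m x) (k : ℕ) :
    P.real {ω | Y ω = k} = bernstein m k x := by
  rw [measureReal_def, hY, ← bernstein_apply, ENNReal.toReal_ofReal bernstein_nonneg]

lemma HasBinomialLaw.comp_ae_eq_sum_indicator (hY : HasBinomialLaw P Y m x) (g : ℕ → ℝ) :
    (fun ω => g (Y ω)) =ᵐ[P]
      fun ω => ∑ k : Fin (m + 1), {ω | Y ω = k}.indicator (fun _ => g k) ω := by
  filter_upwards [hY.ae_le] with ω hω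
  rw [Fintype.sum_eq_single ⟨Y ω, Nat.lt_succ_of_le hω⟩]
  · simp
  · intro k hk
    exact Set.indicator_of_notMem (fun h => hk (Fin.ext h.symm)) _

variable [IsFiniteMeasure P]

lemma HasBinomialLaw.integrable_comp (hY : HasBinomialLaw P Y m x) (hYm : Measurable Y)
    (g : ℕ → ℝ) : Integrable (fun ω => g (Y ω)) P :=
  (integrable_finsetSum _ fun _ _ =>
    (integrable_const _).indicator (hYm (measurableSet_singleton _))).congr
    (hY.comp_ae_eq_sum_indicator g).symm

lemma HasBinomialLaw.integral_comp (hY : HasBinomialLaw P Y m x) (hYm : Measurable Y)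
    (g : ℕ → ℝ) : ∫ ω, g (Y ω) ∂P = ∑ k : Fin (m + 1), g k * bernstein m k x := by
  have hmeas (k : ℕ) : MeasurableSet {ω | Y ω = k} := hYm (measurableSet_singleton k)
  rw [integral_congr_ae (hY.comp_ae_eq_sum_indicator g),
    integral_finsetSum _ fun (k : Fin (m + 1)) _ => (integrable_const (g k)).indicator (hmeas k)]
  refine sum_congr rfl fun k _ => ?_
  rw [integral_indicator_const _ (hmeas k), hY.measureReal_eq, smul_eq_mul, mul_comm]

lemma HasBinomialLaw.integral_abs_div_sub_le (hY : HasBinomialLaw P Y m x)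
    (hYm : Measurable Y) (hm : m ≠ 0) : ∫ ω, |(Y ω : ℝ) / m - x| ∂P ≤ 1 / (2 * √m) := by
  rw [hY.integral_comp hYm fun t => |(t : ℝ) / m - x|]
  exact sum_abs_div_sub_mul_bernstein_le hm x

end Binomial

namespace Inst

variable {S A d : ℕ} (v : Inst S A d)

noncomputable def freqError (n : ℕ) (y : Fin S → Fin A → Fin A → ℕ) (a : Fin S) (b c : Fin A) :
    ℝ :=
  |v.B n y a b c - sigmoid (v.r a b - v.r a c)|

lemma r_sub_r_eq_sum_of_feasible {k : Fin S} {i j : Fin A} {u : Fin S → Fin A → Fin A → ℝ}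
    (hu : v.Feasible k i j u) :
    v.r k i - v.r k j = ∑ a, ∑ b, ∑ c, u a b c * (v.r a b - v.r a c) := by
  simp only [r, ← inner_sub_left, hu.2, sum_inner, real_inner_smul_left]

lemma r_sub_r_le_of_feasible {L : ℝ} (hr : ∀ k i, |v.r k i| ≤ L) {k : Fin S} {i j : Fin A}
    {u : Fin S → Fin A → Fin A → ℝ} (hu : v.Feasible k i j u) {n : ℕ}
    {y : Fin S → Fin A → Fin A → ℕ}
    (hest : 0 ≤ ∑ a, ∑ b, ∑ c, u a b c * logit (clip L (v.B n y a b c))) :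
    v.r k j - v.r k i ≤
      2 * (1 + Real.exp (2 * L)) * ∑ a, ∑ b, ∑ c, |u a b c| * v.freqError n y a b c := by
  have hr₂ (a : Fin S) (b c : Fin A) : |v.r a b - v.r a c| ≤ 2 * L :=
    (abs_sub _ _).trans (by linarith [hr a b, hr a c])
  calc v.r k j - v.r k i
      ≤ (∑ a, ∑ b, ∑ c, u a b c * logit (clip L (v.B n y a b c))) - (v.r k i - v.r k j) := by
        linarith
    _ = ∑ a, ∑ b, ∑ c, u a b c * (logit (clip L (v.B n y a b c)) - (v.r a b - v.r a c)) := by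
        simp only [v.r_sub_r_eq_sum_of_feasible hu, ← sum_sub_distrib, mul_sub]
    _ ≤ ∑ a, ∑ b, ∑ c, |u a b c| * (2 * (1 + Real.exp (2 * L)) * v.freqError n y a b c) := by
        refine sum_le_sum fun a _ => sum_le_sum fun b _ => sum_le_sum fun c _ => ?_
        calc _ ≤ |u a b c| * |logit (clip L (v.B n y a b c)) - (v.r a b - v.r a c)| :=
              (le_abs_self _).trans (abs_mul _ _).le
          _ ≤ _ := mul_le_mul_of_nonneg_left (abs_logit_clip_sub_le (hr₂ a b c) _) (abs_nonneg _)
    _ = _ := by simp only [mul_sum, mul_left_comm]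

lemma freqError_nonneg (n : ℕ) (y : Fin S → Fin A → Fin A → ℕ) (a : Fin S) (b c : Fin A) :
    0 ≤ v.freqError n y a b c :=
  abs_nonneg _

lemma regret_nonneg {istar : Fin S → Fin A} (hbest : v.BestAction istar) (ihat : Fin S → Fin A) :
    0 ≤ v.regret istar ihat := by
  refine sum_nonneg fun k _ => mul_nonneg (v.ρ_pos k).le (sub_nonneg.2 ?_)
  by_cases h : ihat k = istar k
  · rw [h]
  · exact (hbest k _ h).le

lemma regret_le_sum_freqError {L : ℝ} (hr : ∀ k i, |v.r k i| ≤ L) {istar : Fin S → Fin A}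
    {w : Fin S → Fin A → Fin A → Fin S → Fin A → Fin A → ℝ}
    (hw : ∀ k i, i ≠ istar k → v.Feasible k i (istar k) (w k i (istar k)))
    {n : ℕ} {y : Fin S → Fin A → Fin A → ℕ} {ihat : Fin S → Fin A}
    (hihat : ∀ k j, j ≠ ihat k → 0 ≤ v.rhat L n w y k (ihat k) j) :
    v.regret istar ihat ≤ ∑ k, ∑ i ∈ univ.filter (fun i => i ≠ istar k), v.ρ k *
      (2 * (1 + Real.exp (2 * L)) *
        ∑ a, ∑ b, ∑ c, |w k i (istar k) a b c| * v.freqError n y a b c) := by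
  refine sum_le_sum fun k _ => ?_
  have hterm (i : Fin A) : 0 ≤ v.ρ k * (2 * (1 + Real.exp (2 * L)) *
      ∑ a, ∑ b, ∑ c, |w k i (istar k) a b c| * v.freqError n y a b c) :=
    mul_nonneg (v.ρ_pos k).le <| mul_nonneg (by positivity) <| sum_nonneg fun a _ =>
      sum_nonneg fun b _ => sum_nonneg fun c _ =>
        mul_nonneg (abs_nonneg _) (v.freqError_nonneg n y a b c)
  by_cases h : ihat k = istar k
  · rw [h, sub_self, mul_zero]
    exact sum_nonneg fun i _ => hterm i
  · have hest := hihat k (istar k) (Ne.symm h)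
    rw [rhat, if_neg h] at hest
    exact (mul_le_mul_of_nonneg_left (v.r_sub_r_le_of_feasible hr (hw k _ h) hest)
      (v.ρ_pos k).le).trans (single_le_sum (fun i _ => hterm i) (mem_filter.2 ⟨mem_univ _, h⟩))

lemma freqError_eq {n : ℕ} {a : Fin S} {b c : Fin A} (hN : 0 < v.N a b c) {m : ℕ}
    (hm : (m : ℝ) = n * v.N a b c) (y : Fin S → Fin A → Fin A → ℕ) :
    v.freqError n y a b c = |(y a b c : ℝ) / m - unitInterval.sigmoid (v.r a b - v.r a c)| := by
  rw [freqError, B, if_pos hN, hm, sigmoid_eq_real_sigmoid]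
  rfl

end Inst

section Sample

variable {S A d : ℕ} {v : Inst S A d} {n : ℕ} {Ω : Type*} [MeasurableSpace Ω] {P : Measure Ω}
  {Y : Fin S → Fin A → Fin A → Ω → ℕ}

lemma IsBTLSample.hasBinomialLaw (hY : IsBTLSample v n P Y) {a : Fin S} {b c : Fin A}
    (hN : 0 < v.N a b c) {m : ℕ} (hm : (m : ℝ) = n * v.N a b c) :
    HasBinomialLaw P (Y a b c) m (unitInterval.sigmoid (v.r a b - v.r a c)) := by
  have h := hY.2.1 a b c hN
  rwa [← hm, Nat.ceil_natCast, sigmoid_eq_real_sigmoid] at h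

variable [IsFiniteMeasure P]

lemma IsBTLSample.integrable_freqError (hY : IsBTLSample v n P Y)
    (hnN : ∀ a b c, ∃ m : ℕ, (m : ℝ) = n * v.N a b c) (a : Fin S) (b c : Fin A) :
    Integrable (fun ω => v.freqError n (fun k i j => Y k i j ω) a b c) P := by
  by_cases hN : 0 < v.N a b c
  · obtain ⟨m, hm⟩ := hnN a b c
    simp only [v.freqError_eq hN hm]
    exact (hY.hasBinomialLaw hN hm).integrable_comp (hY.1 a b c)
      fun t => |(t : ℝ) / m - unitInterval.sigmoid (v.r a b - v.r a c)|
  · simp only [Inst.freqError, Inst.B, if_neg hN]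
    exact integrable_const _

lemma IsBTLSample.integral_freqError_le (hY : IsBTLSample v n P Y) (hn : n ≠ 0) {a : Fin S}
    {b c : Fin A} (hN : 0 < v.N a b c) {m : ℕ} (hm : (m : ℝ) = n * v.N a b c) :
    ∫ ω, v.freqError n (fun k i j => Y k i j ω) a b c ∂P ≤ 1 / (2 * (√n * √(v.N a b c))) := by
  have hm0 : m ≠ 0 := by
    rintro rfl
    exact (mul_pos (Nat.cast_pos.2 (Nat.pos_of_ne_zero hn)) hN).ne (by exact_mod_cast hm)
  simp only [v.freqError_eq hN hm]
  rw [← Real.sqrt_mul (Nat.cast_nonneg n), ← hm]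
  exact (hY.hasBinomialLaw hN hm).integral_abs_div_sub_le (hY.1 a b c) hm0

lemma IsBTLSample.integrable_sum_abs_mul_freqError (hY : IsBTLSample v n P Y)
    (hnN : ∀ a b c, ∃ m : ℕ, (m : ℝ) = n * v.N a b c) (u : Fin S → Fin A → Fin A → ℝ) :
    Integrable (fun ω => ∑ a, ∑ b, ∑ c, |u a b c| * v.freqError n (fun k i j => Y k i j ω) a b c)
      P :=
  integrable_finsetSum _ fun a _ => integrable_finsetSum _ fun b _ => integrable_finsetSum _
    fun c _ => (hY.integrable_freqError hnN a b c).const_mul _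

lemma IsBTLSample.integral_sum_abs_mul_freqError_le (hY : IsBTLSample v n P Y) (hn : n ≠ 0)
    (hnN : ∀ a b c, ∃ m : ℕ, (m : ℝ) = n * v.N a b c) {u : Fin S → Fin A → Fin A → ℝ}
    (hu : ∀ a b c, v.N a b c = 0 → u a b c = 0) :
    ∫ ω, ∑ a, ∑ b, ∑ c, |u a b c| * v.freqError n (fun k i j => Y k i j ω) a b c ∂P ≤
      v.gammaTilde u / (2 * √n) := by
  have hint (a : Fin S) (b c : Fin A) :=
    (hY.integrable_freqError hnN a b c).const_mul |u a b c|
  rw [integral_finsetSum _ fun a _ => integrable_finsetSum _ fun b _ =>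
    integrable_finsetSum _ fun c _ => hint a b c, Inst.gammaTilde, sum_div]
  refine sum_le_sum fun a _ => ?_
  rw [integral_finsetSum _ fun b _ => integrable_finsetSum _ fun c _ => hint a b c, sum_div]
  refine sum_le_sum fun b _ => ?_
  rw [integral_finsetSum _ fun c _ => hint a b c, sum_div]
  refine sum_le_sum fun c _ => ?_
  rw [integral_const_mul]
  split_ifs with hN
  · obtain ⟨m, hm⟩ := hnN a b c
    calc |u a b c| * ∫ ω, v.freqError n (fun k i j => Y k i j ω) a b c ∂P
        ≤ |u a b c| * (1 / (2 * (√n * √(v.N a b c)))) :=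
          mul_le_mul_of_nonneg_left (hY.integral_freqError_le hn hN hm) (abs_nonneg _)
      _ = |u a b c| / √(v.N a b c) / (2 * √n) := by ring
  · rw [hu a b c (le_antisymm (not_lt.1 hN) (v.N_nonneg a b c))]
    simp

lemma IsBTLSample.integral_regret_le (hY : IsBTLSample v n P Y) (hn : n ≠ 0)
    (hnN : ∀ a b c, ∃ m : ℕ, (m : ℝ) = n * v.N a b c) {L : ℝ} (hr : ∀ k i, |v.r k i| ≤ L)
    {istar : Fin S → Fin A} (hbest : v.BestAction istar)
    {w : Fin S → Fin A → Fin A → Fin S → Fin A → Fin A → ℝ}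
    (hw : ∀ k i, i ≠ istar k → v.Feasible k i (istar k) (w k i (istar k)))
    {ihat : Ω → Fin S → Fin A}
    (hihat : ∀ ω k j, j ≠ ihat ω k →
      0 ≤ v.rhat L n w (fun k' i' j' => Y k' i' j' ω) k (ihat ω k) j) :
    ∫ ω, v.regret istar (ihat ω) ∂P ≤ ∑ k, ∑ i ∈ univ.filter (fun i => i ≠ istar k),
      v.ρ k * (2 * (1 + Real.exp (2 * L)) * (v.gammaTilde (w k i (istar k)) / (2 * √n))) := by
  set K := 2 * (1 + Real.exp (2 * L))
  set X : Fin S → Fin A → Ω → ℝ := fun k i ω =>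
    ∑ a, ∑ b, ∑ c, |w k i (istar k) a b c| * v.freqError n (fun k' i' j' => Y k' i' j' ω) a b c
  have hX (k : Fin S) (i : Fin A) : Integrable (fun ω => v.ρ k * (K * X k i ω)) P :=
    ((hY.integrable_sum_abs_mul_freqError hnN _).const_mul K).const_mul (v.ρ k)
  calc ∫ ω, v.regret istar (ihat ω) ∂P
      ≤ ∫ ω, ∑ k, ∑ i ∈ univ.filter (fun i => i ≠ istar k), v.ρ k * (K * X k i ω) ∂P :=
        integral_mono_of_nonneg (ae_of_all _ fun ω => v.regret_nonneg hbest _)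
          (integrable_finsetSum _ fun k _ => integrable_finsetSum _ fun i _ => hX k i)
          (ae_of_all _ fun ω => v.regret_le_sum_freqError hr hw (hihat ω))
    _ = ∑ k, ∑ i ∈ univ.filter (fun i => i ≠ istar k), v.ρ k * (K * ∫ ω, X k i ω ∂P) := by
        rw [integral_finsetSum _ fun k _ => integrable_finsetSum _ fun i _ => hX k i]
        refine sum_congr rfl fun k _ => ?_
        rw [integral_finsetSum _ fun i _ => hX k i]
        simp only [integral_const_mul]
    _ ≤ _ := by
        refine sum_le_sum fun k _ => sum_le_sum fun i hi => ?_
        gcongr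
        · exact (v.ρ_pos k).le
        · exact hY.integral_sum_abs_mul_freqError_le hn hnN (hw k i (mem_filter.1 hi).2).1

end Sample

end RLHF

open Finset

theorem rl_low_worst_case_upper_bound_general (L : ℝ) :
    ∃ C : ℝ, 0 < C ∧
      ∀ (S A d : ℕ), 2 ≤ A →
      ∀ v : Inst S A d, (∀ k i, |v.r k i| ≤ L) → v.Consistent →
      ∀ istar : Fin S → Fin A, v.BestAction istar →
      ∀ w : Fin S → Fin A → Fin A → Fin S → Fin A → Fin A → ℝ,
        (∀ k i j, i ≠ j → v.IsLOW k i j (w k i j)) →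
      ∀ n : ℕ, 1 ≤ n →
        (∀ k i j, ∃ m : ℕ, (m : ℝ) = n * v.N k i j) →
        ∀ (Ω : Type) [MeasurableSpace Ω] (P : MeasureTheory.Measure Ω),
          MeasureTheory.IsProbabilityMeasure P →
        ∀ Y : Fin S → Fin A → Fin A → Ω → ℕ, IsBTLSample v n P Y →
        ∀ ihat : Ω → Fin S → Fin A,
          (∀ k a, MeasurableSet {ω | ihat ω k = a}) →
          (∀ ω k j, j ≠ ihat ω k →
            0 ≤ v.rhat L n w (fun k' i' j' => Y k' i' j' ω) k (ihat ω k) j) →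
          ∫ ω, v.regret istar (ihat ω) ∂P ≤
            C / Real.sqrt n *
              ∑ k, ∑ i, if i ≠ istar k then
                v.ρ k * (Real.sqrt (v.cost (w k i (istar k))) +
                  v.gammaTilde (w k i (istar k))) else 0 := by
  refine ⟨1 + Real.exp (2 * L), by positivity, ?_⟩
  intro S A d _ v hr _ istar hbest w hw n hn hnN Ω _ P _ Y hY ihat _ hihat
  have hfeas k i (hi : i ≠ istar k) : v.Feasible k i (istar k) (w k i (istar k)) :=
    (hw k i (istar k) hi).1
  refine (hY.integral_regret_le (by omega) hnN hr hbest hfeas hihat).trans ?_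
  simp only [← sum_filter, mul_sum]
  refine sum_le_sum fun k _ => sum_le_sum fun i _ => ?_
  calc v.ρ k * (2 * (1 + Real.exp (2 * L)) * (v.gammaTilde (w k i (istar k)) / (2 * √n)))
      = (1 + Real.exp (2 * L)) / √n * (v.ρ k * v.gammaTilde (w k i (istar k))) := by ring
    _ ≤ _ := by
        gcongr
        · exact (v.ρ_pos k).le
        · exact le_add_of_nonneg_left (Real.sqrt_nonneg _)

/-- **Proposition 3 (Worst-case upper bound for RL-LOW).**
There exists a constant `C > 0` depending only on `L` such that for every consistent
instance `v` and every `n ≥ 1` with `n·N_{k,i,j} ∈ ℕ`, and every measurable choice of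
`î_k ∈ Î_k`, the expected simple regret of RL-LOW satisfies
`E[R_n] ≤ C·n^{−1/2}·Σ_{k, i ≠ i*_k} ρ_k·(√(γ_{k,i}) + γ̃_{k,i})`. -/
theorem rl_low_worst_case_upper_bound (L : ℝ) (hL : 0 < L) :
    ∃ C : ℝ, 0 < C ∧
      ∀ (S A d : ℕ), 2 ≤ A →
      ∀ v : Inst S A d, (∀ k i, |v.r k i| ≤ L) → v.Consistent →
      ∀ istar : Fin S → Fin A, v.BestAction istar →
      ∀ w : Fin S → Fin A → Fin A → Fin S → Fin A → Fin A → ℝ,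
        (∀ k i j, i ≠ j → v.IsLOW k i j (w k i j)) →
      ∀ n : ℕ, 1 ≤ n →
        (∀ k i j, ∃ m : ℕ, (m : ℝ) = n * v.N k i j) →
        ∀ (Ω : Type) [MeasurableSpace Ω] (P : MeasureTheory.Measure Ω),
          MeasureTheory.IsProbabilityMeasure P →
        ∀ Y : Fin S → Fin A → Fin A → Ω → ℕ, IsBTLSample v n P Y →
        ∀ ihat : Ω → Fin S → Fin A,
          (∀ k a, MeasurableSet {ω | ihat ω k = a}) →
          (∀ ω k j, j ≠ ihat ω k →
            0 ≤ v.rhat L n w (fun k' i' j' => Y k' i' j' ω) k (ihat ω k) j) →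
          ∫ ω, v.regret istar (ihat ω) ∂P ≤
            C / Real.sqrt n *
              ∑ k, ∑ i, if i ≠ istar k then
                v.ρ k * (Real.sqrt (v.cost (w k i (istar k))) +
                  v.gammaTilde (w k i (istar k))) else 0 :=
  rl_low_worst_case_upper_bound_general L
end

section
/- Transitivity of RL-LOW estimates (Proposition 2): For any consistent offline RLHF instance and any realization of the data, the RL-LOW estimates satisfy: the set Î_k = {i ∈ 𝒜 : r̂_{k,i,j} ≥ 0 for all j ≠ i} is nonempty for every state k, and for any j₁, j₂ ∈ 𝒜, argmax_{i∈𝒜} r̂_{k,i,j₁} = argmax_{i∈𝒜} r̂_{k,i,j₂} = Î_k. -/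
/-! The locally optimal weights for `(k,i,j)` are the minimum-norm solution, for the weighted
norm `∑ u² / N`, of a linear system with right-hand side `φ(k,i) − φ(k,j)`. They are
characterized by orthogonality to the feasible directions, a condition that is linear in the
right-hand side, and the norm is definite on weights supported where `N > 0`. Hence
`w^{(k,i,j)} = w^{(k,i,l)} − w^{(k,j,l)}` for a fixed `l`, so `r̂_{k,i,j} = g i − g j` with
`g i = r̂_{k,i,l}`, and every argmax set, as well as `Î_k`, is the argmax of `g`. -/

open MeasureTheory ProbabilityTheory Real

open RLHF

namespace QuadraticMap

variable {𝕜 V : Type*} [Field 𝕜] [LinearOrder 𝕜] [IsStrictOrderedRing 𝕜]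
  [AddCommGroup V] [Module 𝕜 V] {Q : QuadraticForm 𝕜 V}

theorem polar_eq_zero_of_forall_le_map_add_smul {u z : V}
    (h : ∀ t : 𝕜, Q u ≤ Q (u + t • z)) : polar Q u z = 0 := by
  have hquad : ∀ t : 𝕜, 0 ≤ Q z * (t * t) + polar Q u z * t + 0 := fun t => by
    have h_expand := polar_smul_right Q t u z
    rw [polar, QuadraticMap.map_smul, smul_eq_mul, smul_eq_mul] at h_expand
    linarith [h t]
  have hdiscrim := discrim_le_zero hquad
  rw [discrim, mul_zero, sub_zero] at hdiscrim
  exact pow_eq_zero_iff two_ne_zero |>.mp (le_antisymm hdiscrim (sq_nonneg _))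

theorem eq_of_polar_eq_zero {K : Submodule 𝕜 V} (hK : ∀ z ∈ K, Q z = 0 → z = 0) {u₁ u₂ : V}
    (h₁ : ∀ z ∈ K, polar Q u₁ z = 0) (h₂ : ∀ z ∈ K, polar Q u₂ z = 0) (h : u₁ - u₂ ∈ K) :
    u₁ = u₂ := by
  have hpolar : polar Q (u₁ - u₂) (u₁ - u₂) = 0 := by
    rw [polar_sub_left, h₁ _ h, h₂ _ h, sub_zero]
  rw [polar_self, two_nsmul, ← two_mul, mul_eq_zero] at hpolar
  exact sub_eq_zero.mp (hK _ h (hpolar.resolve_left two_ne_zero))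

end QuadraticMap

namespace RLHF.Inst

variable {S A d : ℕ} (v : Inst S A d)

def supported : Submodule ℝ (Fin S → Fin A → Fin A → ℝ) where
  carrier := {u | ∀ k i j, v.N k i j = 0 → u k i j = 0}
  zero_mem' := by simp
  add_mem' hu hz k i j h := by simp [hu k i j h, hz k i j h]
  smul_mem' c u hu k i j h := by simp [hu k i j h]

noncomputable def featureDiffMap :
    (Fin S → Fin A → Fin A → ℝ) →ₗ[ℝ] EuclideanSpace ℝ (Fin d) where
  toFun u := ∑ k, ∑ i, ∑ j, u k i j • (v.φ k i - v.φ k j)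
  map_add' u z := by simp only [Pi.add_apply, add_smul, Finset.sum_add_distrib]
  map_smul' c u := by
    simp only [Pi.smul_apply, smul_eq_mul, mul_smul, Finset.smul_sum, RingHom.id_apply]

noncomputable def costForm : QuadraticForm ℝ (Fin S → Fin A → Fin A → ℝ) :=
  ∑ k, ∑ i, ∑ j, (if 0 < v.N k i j then (v.N k i j)⁻¹ else 0) •
    QuadraticMap.sq.comp (LinearMap.proj j ∘ₗ LinearMap.proj i ∘ₗ LinearMap.proj k)

theorem costForm_apply (u : Fin S → Fin A → Fin A → ℝ) : v.costForm u = v.cost u := by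
  simp only [costForm, cost, ite_smul, zero_smul, sum_apply]
  refine Finset.sum_congr rfl fun k _ => Finset.sum_congr rfl fun i _ =>
    Finset.sum_congr rfl fun j _ => ?_
  split_ifs <;> simp [div_eq_inv_mul, sq]

theorem feasible_iff {k : Fin S} {i j : Fin A} {u : Fin S → Fin A → Fin A → ℝ} :
    v.Feasible k i j u ↔ u ∈ v.supported ∧ v.featureDiffMap u = v.φ k i - v.φ k j := by
  rw [Feasible, eq_comm (a := v.φ k i - v.φ k j)]
  rfl

theorem eq_zero_of_cost_eq_zero {u : Fin S → Fin A → Fin A → ℝ} (hu : u ∈ v.supported)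
    (h : v.cost u = 0) : u = 0 := by
  have hterm_nonneg : ∀ k i j, 0 ≤ if 0 < v.N k i j then u k i j ^ 2 / v.N k i j else 0 :=
    fun k i j => by split_ifs <;> positivity
  simp only [cost, ← Fintype.sum_prod_type'] at h
  have hterm := (Fintype.sum_eq_zero_iff_of_nonneg fun x => hterm_nonneg _ _ _).1 h
  ext k i j
  by_cases hN : 0 < v.N k i j
  · simpa [hN, hN.ne'] using congrFun hterm (k, i, j)
  · exact hu k i j (le_antisymm (not_lt.1 hN) (v.N_nonneg k i j))

noncomputable def feasibleDirections : Submodule ℝ (Fin S → Fin A → Fin A → ℝ) :=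
  v.supported ⊓ LinearMap.ker v.featureDiffMap

variable {v} {k : Fin S} {i j l : Fin A} {u u₁ u₂ z : Fin S → Fin A → Fin A → ℝ}

theorem Feasible.add_mem_feasibleDirections (hu : v.Feasible k i j u)
    (hz : z ∈ v.feasibleDirections) :
    v.Feasible k i j (u + z) := by
  rw [feasible_iff] at hu ⊢
  obtain ⟨hz_supp, hz_ker⟩ := Submodule.mem_inf.1 hz
  rw [LinearMap.mem_ker] at hz_ker
  exact ⟨add_mem hu.1 hz_supp, by rw [map_add, hz_ker, add_zero, hu.2]⟩

theorem Feasible.sub_mem_feasibleDirections (h₁ : v.Feasible k i j u₁)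
    (h₂ : v.Feasible k i j u₂) : u₁ - u₂ ∈ v.feasibleDirections := by
  rw [feasible_iff] at h₁ h₂
  refine Submodule.mem_inf.2 ⟨sub_mem h₁.1 h₂.1, ?_⟩
  rw [LinearMap.mem_ker, map_sub, h₁.2, h₂.2, sub_self]

variable (v) in
/-- The first-order optimality condition for the locally optimal weights. -/
def IsCritical (k : Fin S) (i j : Fin A) (u : Fin S → Fin A → Fin A → ℝ) : Prop :=
  v.Feasible k i j u ∧ ∀ z ∈ v.feasibleDirections, QuadraticMap.polar v.costForm u z = 0

theorem IsLOW.isCritical (h : v.IsLOW k i j u) : v.IsCritical k i j u := by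
  refine ⟨h.1, fun z hz => QuadraticMap.polar_eq_zero_of_forall_le_map_add_smul fun t => ?_⟩
  rw [costForm_apply, costForm_apply]
  exact h.2 _ (h.1.add_mem_feasibleDirections (Submodule.smul_mem _ t hz))

variable (v) in
theorem isCritical_zero (k : Fin S) (i : Fin A) : v.IsCritical k i i 0 :=
  ⟨(feasible_iff v).2 ⟨v.supported.zero_mem, by rw [map_zero, sub_self]⟩,
    fun z _ => v.costForm.polar_zero_left z⟩

theorem IsCritical.sub (h₁ : v.IsCritical k i l u₁) (h₂ : v.IsCritical k j l u₂) :
    v.IsCritical k i j (u₁ - u₂) := by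
  obtain ⟨hf₁, ho₁⟩ := h₁
  obtain ⟨hf₂, ho₂⟩ := h₂
  rw [feasible_iff] at hf₁ hf₂
  refine ⟨(feasible_iff v).2 ⟨sub_mem hf₁.1 hf₂.1, ?_⟩, fun z hz => ?_⟩
  · rw [map_sub, hf₁.2, hf₂.2, sub_sub_sub_cancel_right]
  · rw [QuadraticMap.polar_sub_left, ho₁ z hz, ho₂ z hz, sub_zero]

theorem IsCritical.unique (h₁ : v.IsCritical k i j u₁) (h₂ : v.IsCritical k i j u₂) :
    u₁ = u₂ :=
  have hdefinite : ∀ z ∈ v.feasibleDirections, v.costForm z = 0 → z = 0 := fun z hz hz₀ =>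
    v.eq_zero_of_cost_eq_zero (Submodule.mem_inf.1 hz).1 (by rwa [← costForm_apply])
  QuadraticMap.eq_of_polar_eq_zero hdefinite h₁.2 h₂.2 (h₁.1.sub_mem_feasibleDirections h₂.1)

/-- The RL-LOW weights with the convention `w^{(k,i,i)} = 0` that `rhat` uses on the diagonal. -/
def lowWeights (w : Fin S → Fin A → Fin A → Fin S → Fin A → Fin A → ℝ) (k : Fin S)
    (i j : Fin A) : Fin S → Fin A → Fin A → ℝ :=
  if i = j then 0 else w k i j

theorem isCritical_lowWeights {w : Fin S → Fin A → Fin A → Fin S → Fin A → Fin A → ℝ}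
    (hw : ∀ k i j, i ≠ j → v.IsLOW k i j (w k i j)) (k : Fin S) (i j : Fin A) :
    v.IsCritical k i j (lowWeights w k i j) := by
  unfold lowWeights
  split_ifs with hij
  · exact hij ▸ v.isCritical_zero k i
  · exact (hw k i j hij).isCritical

theorem lowWeights_eq_sub {w : Fin S → Fin A → Fin A → Fin S → Fin A → Fin A → ℝ}
    (hw : ∀ k i j, i ≠ j → v.IsLOW k i j (w k i j)) (k : Fin S) (i j l : Fin A) :
    lowWeights w k i j = lowWeights w k i l - lowWeights w k j l :=
  (isCritical_lowWeights hw k i j).unique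
    ((isCritical_lowWeights hw k i l).sub (isCritical_lowWeights hw k j l))

theorem rhat_eq_sum_lowWeights (L : ℝ) (n : ℕ)
    (w : Fin S → Fin A → Fin A → Fin S → Fin A → Fin A → ℝ) (y : Fin S → Fin A → Fin A → ℕ)
    (k : Fin S) (i j : Fin A) :
    v.rhat L n w y k i j =
      ∑ k', ∑ i', ∑ j', lowWeights w k i j k' i' j' * logit (clip L (v.B n y k' i' j')) := by
  unfold rhat lowWeights
  split_ifs <;> simp

theorem rhat_eq_sub {w : Fin S → Fin A → Fin A → Fin S → Fin A → Fin A → ℝ}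
    (hw : ∀ k i j, i ≠ j → v.IsLOW k i j (w k i j)) (L : ℝ) (n : ℕ)
    (y : Fin S → Fin A → Fin A → ℕ) (k : Fin S) (i j l : Fin A) :
    v.rhat L n w y k i j = v.rhat L n w y k i l - v.rhat L n w y k j l := by
  simp only [rhat_eq_sum_lowWeights, lowWeights_eq_sub hw k i j l, Pi.sub_apply, sub_mul,
    Finset.sum_sub_distrib]

end RLHF.Inst

section PotentialDifferences

variable {ι α : Type*} [AddCommGroup α] [PartialOrder α] [IsOrderedAddMonoid α]

theorem setOf_forall_sub_le_sub_right (g : ι → α) (j : ι) :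
    {i | ∀ i', g i' - g j ≤ g i - g j} = {i | ∀ i', g i' ≤ g i} := by
  simp only [sub_le_sub_iff_right]

theorem setOf_forall_ne_sub_nonneg (g : ι → α) :
    {i | ∀ j, j ≠ i → 0 ≤ g i - g j} = {i | ∀ j, g j ≤ g i} := by
  ext i
  simp only [Set.mem_ofPred_eq, sub_nonneg]
  exact ⟨fun h j => (eq_or_ne j i).elim (fun hji => hji ▸ le_rfl) (h j), fun h j _ => h j⟩

end PotentialDifferences

theorem rl_low_transitivity_general (L : ℝ) (S A d : ℕ) (hA : 2 ≤ A)
    (v : Inst S A d)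
    (w : Fin S → Fin A → Fin A → Fin S → Fin A → Fin A → ℝ)
    (hw : ∀ k i j, i ≠ j → v.IsLOW k i j (w k i j))
    (n : ℕ) (y : Fin S → Fin A → Fin A → ℕ) (k : Fin S) :
    {i : Fin A | ∀ j, j ≠ i → 0 ≤ v.rhat L n w y k i j}.Nonempty ∧
    ∀ j₁ j₂ : Fin A,
      {i : Fin A | ∀ i', v.rhat L n w y k i' j₁ ≤ v.rhat L n w y k i j₁} =
        {i : Fin A | ∀ i', v.rhat L n w y k i' j₂ ≤ v.rhat L n w y k i j₂} ∧
      {i : Fin A | ∀ i', v.rhat L n w y k i' j₁ ≤ v.rhat L n w y k i j₁} =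
        {i : Fin A | ∀ j, j ≠ i → 0 ≤ v.rhat L n w y k i j} := by
  let l : Fin A := ⟨0, by omega⟩
  set g : Fin A → ℝ := fun i => v.rhat L n w y k i l
  have hpotential : ∀ i j, v.rhat L n w y k i j = g i - g j := fun i j =>
    v.rhat_eq_sub hw L n y k i j l
  simp only [hpotential, setOf_forall_sub_le_sub_right, setOf_forall_ne_sub_nonneg]
  have : Nonempty (Fin A) := ⟨l⟩
  exact ⟨Finite.exists_max g, fun _ _ => ⟨trivial, trivial⟩⟩

/-- **Proposition 2 (Transitivity of the RL-LOW estimates).**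
For any consistent instance and any realization `y` of the data, the set
`Î_k = {i : r̂_{k,i,j} ≥ 0 for all j ≠ i}` is nonempty, and for all `j₁, j₂`,
`argmax_i r̂_{k,i,j₁} = argmax_i r̂_{k,i,j₂} = Î_k`. -/
theorem rl_low_transitivity (L : ℝ) (hL : 0 < L) (S A d : ℕ) (hA : 2 ≤ A)
    (v : Inst S A d) (hr : ∀ k i, |v.r k i| ≤ L) (hcons : v.Consistent)
    (w : Fin S → Fin A → Fin A → Fin S → Fin A → Fin A → ℝ)
    (hw : ∀ k i j, i ≠ j → v.IsLOW k i j (w k i j))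
    (n : ℕ) (y : Fin S → Fin A → Fin A → ℕ) (k : Fin S) :
    {i : Fin A | ∀ j, j ≠ i → 0 ≤ v.rhat L n w y k i j}.Nonempty ∧
    ∀ j₁ j₂ : Fin A,
      {i : Fin A | ∀ i', v.rhat L n w y k i' j₁ ≤ v.rhat L n w y k i j₁} =
        {i : Fin A | ∀ i', v.rhat L n w y k i' j₂ ≤ v.rhat L n w y k i j₂} ∧
      {i : Fin A | ∀ i', v.rhat L n w y k i' j₁ ≤ v.rhat L n w y k i j₁} =
        {i : Fin A | ∀ j, j ≠ i → 0 ≤ v.rhat L n w y k i j} :=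
  rl_low_transitivity_general L S A d hA v w hw n y k
end

section
/- KL divergence between instances (Lemma 1, with provable constants): Let v = (ρ,𝒮,𝒜,φ,N,θ) and v' = (ρ,𝒮,𝒜,φ,N,θ') be two instances differing only in the parameter vector, and let R_max = max_{k∈𝒮, i∈𝒜} max(|⟨φ(k,i),θ⟩|, |⟨φ(k,i),θ'⟩|). Then (n/8)·exp(−4R_max)·D̃(v,v') ≤ D_KL(P_v^{(n)} ‖ P_{v'}^{(n)}) ≤ 2n·exp(2R_max)·D̃(v,v'), where D̃(v,v') = Σ_{k,i,j} N_{k,i,j}·(⟨φ(k,i) − φ(k,j), θ − θ'⟩)². -/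
open MeasureTheory ProbabilityTheory Real

open RLHF

/-- KL divergence between Bernoulli distributions with parameters `p` and `q`. -/
noncomputable def bernKL (p q : ℝ) : ℝ :=
  p * Real.log (p / q) + (1 - p) * Real.log ((1 - p) / (1 - q))

/-- The approximation `D̃(v,v')` of the KL divergence between two instances differing
only in the parameter vector. -/
noncomputable def RLHF.Inst.Dtilde {S A d : ℕ} (v : Inst S A d)
    (θ' : EuclideanSpace ℝ (Fin d)) : ℝ :=
  ∑ k, ∑ i, ∑ j,
    v.N k i j * (@inner ℝ _ _ (v.φ k i - v.φ k j) (v.θ - θ')) ^ 2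


/-! The Bernoulli KL divergence between `σ(a)` and `σ(b)` is the Bregman divergence of the
softplus function `log (1 + eˣ)` between `b` and `a`, and the second derivative of softplus
is `σ (1 - σ)`. By Taylor's theorem the divergence is `σ(ξ) (1 - σ(ξ)) (b - a)² / 2` for some
`ξ` between `a` and `b`, and `e^{-|ξ|} / 4 ≤ σ(ξ) (1 - σ(ξ)) ≤ 1 / 4`. For the triple
`(k,i,j)` we have `a - b = ⟨φ(k,i) - φ(k,j), θ - θ'⟩` and `|a|, |b| ≤ 2 R_max`; summing with
the weights `N` gives the bounds with the sharper constants `e^{-2 R_max} / 8` and `1 / 8`. -/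

noncomputable def Real.softplus (x : ℝ) : ℝ := Real.log (1 + Real.exp x)

theorem RLHF.sigmoid_eq_real_sigmoid_s5 : RLHF.sigmoid = Real.sigmoid := by
  ext x
  rw [RLHF.sigmoid, Real.sigmoid_def, Real.exp_neg]
  field_simp
  ring

theorem Real.sigmoid_eq_exp_div (x : ℝ) : Real.sigmoid x = Real.exp x / (1 + Real.exp x) := by
  rw [← RLHF.sigmoid_eq_real_sigmoid_s5, RLHF.sigmoid]

theorem Real.one_sub_sigmoid (x : ℝ) : 1 - Real.sigmoid x = (1 + Real.exp x)⁻¹ := by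
  rw [← Real.sigmoid_neg, Real.sigmoid_def, neg_neg]

theorem Real.log_sigmoid (x : ℝ) : Real.log (Real.sigmoid x) = x - Real.softplus x := by
  rw [Real.sigmoid_eq_exp_div, Real.log_div (by positivity) (by positivity), Real.log_exp,
    Real.softplus]

theorem Real.log_one_sub_sigmoid (x : ℝ) : Real.log (1 - Real.sigmoid x) = -Real.softplus x := by
  rw [Real.one_sub_sigmoid, Real.log_inv, Real.softplus]

theorem bernKL_sigmoid_sigmoid (a b : ℝ) :
    bernKL (Real.sigmoid a) (Real.sigmoid b) =
      Real.softplus b - Real.softplus a - Real.sigmoid a * (b - a) := by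
  rw [bernKL, Real.log_div (Real.sigmoid_pos a).ne' (Real.sigmoid_pos b).ne',
    Real.log_div (sub_pos.2 (Real.sigmoid_lt_one a)).ne' (sub_pos.2 (Real.sigmoid_lt_one b)).ne',
    Real.log_sigmoid, Real.log_sigmoid, Real.log_one_sub_sigmoid, Real.log_one_sub_sigmoid]
  ring

theorem Real.hasDerivAt_softplus (x : ℝ) : HasDerivAt Real.softplus (Real.sigmoid x) x := by
  have := ((Real.hasDerivAt_exp x).const_add 1).log (by positivity)
  rwa [Real.sigmoid_eq_exp_div]

theorem Real.deriv_softplus : deriv Real.softplus = Real.sigmoid :=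
  funext fun x => (Real.hasDerivAt_softplus x).deriv

theorem Real.contDiff_softplus {n : WithTop ℕ∞} : ContDiff ℝ n Real.softplus :=
  (contDiff_const.add Real.contDiff_exp).log fun x => by positivity

theorem Real.exists_softplus_taylor_remainder_eq {a b : ℝ} (hab : a ≠ b) :
    ∃ ξ ∈ Set.uIoo a b, Real.softplus b - Real.softplus a - Real.sigmoid a * (b - a) =
      Real.sigmoid ξ * (1 - Real.sigmoid ξ) / 2 * (b - a) ^ 2 := by
  obtain ⟨ξ, hξ, h⟩ :=
    taylor_mean_remainder_lagrange_iteratedDeriv hab Real.contDiff_softplus.contDiffOn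
  refine ⟨ξ, hξ, ?_⟩
  have hderiv : derivWithin Real.softplus (Set.uIcc a b) a = Real.sigmoid a := by
    rw [(Real.hasDerivAt_softplus a).differentiableAt.derivWithin
      (uniqueDiffOn_uIcc hab a Set.left_mem_uIcc), Real.deriv_softplus]
  rw [taylorWithinEval_succ, taylor_within_zero_eval, iteratedDerivWithin_one, hderiv,
    iteratedDeriv_succ, iteratedDeriv_one, Real.deriv_softplus, Real.deriv_sigmoid] at h
  norm_num at h
  linear_combination h

theorem Real.sigmoid_mul_one_sub_le (x : ℝ) : Real.sigmoid x * (1 - Real.sigmoid x) ≤ 1 / 4 := by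
  nlinarith [sq_nonneg (2 * Real.sigmoid x - 1)]

theorem Real.sigmoid_mul_one_sub_eq_abs (x : ℝ) :
    Real.sigmoid x * (1 - Real.sigmoid x) = Real.sigmoid |x| * Real.sigmoid (-|x|) := by
  rcases abs_choice x with h | h
  · rw [h, Real.sigmoid_neg]
  · rw [h, neg_neg, Real.sigmoid_neg, mul_comm]

theorem Real.exp_neg_abs_div_four_le_sigmoid_mul_one_sub (x : ℝ) :
    Real.exp (-|x|) / 4 ≤ Real.sigmoid x * (1 - Real.sigmoid x) := by
  have hhalf : 1 / 2 ≤ Real.sigmoid |x| := by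
    simpa using Real.sigmoid_le (abs_nonneg x)
  have hneg : Real.exp (-|x|) / 2 ≤ Real.sigmoid (-|x|) :=
    calc Real.exp (-|x|) / 2 = (2 * Real.exp |x|)⁻¹ := by rw [Real.exp_neg]; ring
      _ ≤ (1 + Real.exp |x|)⁻¹ :=
        inv_anti₀ (by positivity) (by linarith [Real.one_le_exp (abs_nonneg x)])
      _ = Real.sigmoid (-|x|) := by rw [Real.sigmoid_def, neg_neg]
  rw [Real.sigmoid_mul_one_sub_eq_abs]
  nlinarith [Real.exp_pos (-|x|)]

theorem bernKL_sigmoid_sigmoid_bounds {c a b : ℝ} (ha : |a| ≤ c) (hb : |b| ≤ c) :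
    Real.exp (-c) / 8 * (b - a) ^ 2 ≤ bernKL (Real.sigmoid a) (Real.sigmoid b) ∧
      bernKL (Real.sigmoid a) (Real.sigmoid b) ≤ (b - a) ^ 2 / 8 := by
  rcases eq_or_ne a b with rfl | hab
  · simp [bernKL_sigmoid_sigmoid]
  obtain ⟨ξ, hξ, hkl⟩ := Real.exists_softplus_taylor_remainder_eq hab
  have hξc : |ξ| ≤ c :=
    abs_le.2 (Set.uIcc_subset_Icc (abs_le.1 ha) (abs_le.1 hb) (Set.uIoo_subset_uIcc_self hξ))
  have hlow := Real.exp_neg_abs_div_four_le_sigmoid_mul_one_sub ξ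
  have hupp := Real.sigmoid_mul_one_sub_le ξ
  have hexp : Real.exp (-c) ≤ Real.exp (-|ξ|) := Real.exp_le_exp.2 (neg_le_neg hξc)
  rw [bernKL_sigmoid_sigmoid, hkl]
  constructor <;> nlinarith [sq_nonneg (b - a)]

theorem le_ciSup_ciSup {α ι κ : Type*} [ConditionallyCompleteLattice α] [Finite ι] [Finite κ]
    (f : ι → κ → α) (k : ι) (i : κ) :
    f k i ≤ ⨆ k, ⨆ i, f k i :=
  (le_ciSup (Set.finite_range _).bddAbove i).trans
    (le_ciSup (f := fun k => ⨆ i, f k i) (Set.finite_range _).bddAbove k)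

namespace RLHF.Inst

variable {S A d : ℕ}

noncomputable def klPerSample (v : Inst S A d) (θ' : EuclideanSpace ℝ (Fin d)) : ℝ :=
  ∑ k, ∑ i, ∑ j, v.N k i j *
    bernKL (RLHF.sigmoid (v.r k i - v.r k j))
      (RLHF.sigmoid ({ v with θ := θ' }.r k i - { v with θ := θ' }.r k j))

theorem Dtilde_nonneg (v : Inst S A d) (θ' : EuclideanSpace ℝ (Fin d)) : 0 ≤ v.Dtilde θ' :=
  Finset.sum_nonneg fun k _ => Finset.sum_nonneg fun i _ => Finset.sum_nonneg fun j _ =>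
    mul_nonneg (v.N_nonneg k i j) (sq_nonneg _)

theorem r_sub_sub_r_sub (v : Inst S A d) (θ' : EuclideanSpace ℝ (Fin d)) (k : Fin S)
    (i j : Fin A) :
    (v.r k i - v.r k j) - ({ v with θ := θ' }.r k i - { v with θ := θ' }.r k j) =
      @inner ℝ _ _ (v.φ k i - v.φ k j) (v.θ - θ') := by
  simp only [r, inner_sub_left, inner_sub_right]

theorem bernKL_sigmoid_r_bounds (v : Inst S A d) (θ' : EuclideanSpace ℝ (Fin d)) {R : ℝ}
    (hR : ∀ k i, |v.r k i| ≤ R ∧ |{ v with θ := θ' }.r k i| ≤ R) (k : Fin S) (i j : Fin A) :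
    let kl := bernKL (RLHF.sigmoid (v.r k i - v.r k j))
      (RLHF.sigmoid ({ v with θ := θ' }.r k i - { v with θ := θ' }.r k j))
    Real.exp (-(2 * R)) / 8 * (@inner ℝ _ _ (v.φ k i - v.φ k j) (v.θ - θ')) ^ 2 ≤ kl ∧
      kl ≤ (@inner ℝ _ _ (v.φ k i - v.φ k j) (v.θ - θ')) ^ 2 / 8 := by
  have hdiff {x y : ℝ} (hx : |x| ≤ R) (hy : |y| ≤ R) : |x - y| ≤ 2 * R := by
    linarith [abs_sub x y]
  have := bernKL_sigmoid_sigmoid_bounds (hdiff (hR k i).1 (hR k j).1)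
    (hdiff (hR k i).2 (hR k j).2)
  rwa [← neg_sub, neg_sq, r_sub_sub_r_sub, ← sigmoid_eq_real_sigmoid_s5] at this

theorem exp_mul_Dtilde_le_klPerSample (v : Inst S A d) (θ' : EuclideanSpace ℝ (Fin d)) {R : ℝ}
    (hR : ∀ k i, |v.r k i| ≤ R ∧ |{ v with θ := θ' }.r k i| ≤ R) :
    Real.exp (-(2 * R)) / 8 * v.Dtilde θ' ≤ v.klPerSample θ' := by
  simp only [Dtilde, klPerSample, Finset.mul_sum]
  refine Finset.sum_le_sum fun k _ => Finset.sum_le_sum fun i _ => Finset.sum_le_sum fun j _ => ?_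
  rw [mul_left_comm]
  exact mul_le_mul_of_nonneg_left (v.bernKL_sigmoid_r_bounds θ' hR k i j).1 (v.N_nonneg k i j)

theorem klPerSample_le_Dtilde_div_eight (v : Inst S A d) (θ' : EuclideanSpace ℝ (Fin d)) {R : ℝ}
    (hR : ∀ k i, |v.r k i| ≤ R ∧ |{ v with θ := θ' }.r k i| ≤ R) :
    v.klPerSample θ' ≤ v.Dtilde θ' / 8 := by
  simp only [Dtilde, klPerSample, Finset.sum_div]
  refine Finset.sum_le_sum fun k _ => Finset.sum_le_sum fun i _ => Finset.sum_le_sum fun j _ => ?_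
  rw [mul_div_assoc]
  exact mul_le_mul_of_nonneg_left (v.bernKL_sigmoid_r_bounds θ' hR k i j).2 (v.N_nonneg k i j)

end RLHF.Inst

theorem kl_divergence_between_instances_general (S A d : ℕ) (n : ℕ)
    (v : Inst S A d) (θ' : EuclideanSpace ℝ (Fin d)) :
    let v' : Inst S A d := { v with θ := θ' }
    let Rmax : ℝ := ⨆ k, ⨆ i, max |v.r k i| |v'.r k i|
    let DKL : ℝ := n * ∑ k, ∑ i, ∑ j,
      v.N k i j * bernKL (RLHF.sigmoid (v.r k i - v.r k j)) (RLHF.sigmoid (v'.r k i - v'.r k j))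
    (n / 8 : ℝ) * Real.exp (-4 * Rmax) * v.Dtilde θ' ≤ DKL ∧
      DKL ≤ 2 * n * Real.exp (2 * Rmax) * v.Dtilde θ' := by
  intro v' Rmax DKL
  have hR : ∀ k i, |v.r k i| ≤ Rmax ∧ |v'.r k i| ≤ Rmax := fun k i =>
    max_le_iff.1 (le_ciSup_ciSup (fun k i => max |v.r k i| |v'.r k i|) k i)
  have hR0 : 0 ≤ Rmax :=
    Real.iSup_nonneg fun k => Real.iSup_nonneg fun i => (abs_nonneg _).trans (le_max_left _ _)
  have hD := v.Dtilde_nonneg θ'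
  have hlow := v.exp_mul_Dtilde_le_klPerSample θ' hR
  have hupp := v.klPerSample_le_Dtilde_div_eight θ' hR
  change _ ≤ n * v.klPerSample θ' ∧ n * v.klPerSample θ' ≤ _
  constructor
  · calc (n / 8 : ℝ) * Real.exp (-4 * Rmax) * v.Dtilde θ'
        = n * (Real.exp (-4 * Rmax) / 8 * v.Dtilde θ') := by ring
      _ ≤ n * (Real.exp (-(2 * Rmax)) / 8 * v.Dtilde θ') := by gcongr; linarith
      _ ≤ n * v.klPerSample θ' := by gcongr
  · have hexp : 1 ≤ Real.exp (2 * Rmax) := Real.one_le_exp (by linarith)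
    calc n * v.klPerSample θ' ≤ n * (v.Dtilde θ' / 8) := by gcongr
      _ ≤ 2 * n * Real.exp (2 * Rmax) * v.Dtilde θ' := by
        nlinarith [mul_nonneg (Nat.cast_nonneg (α := ℝ) n) hD]

/-- **Lemma 1 (KL divergence between instances, with provable constants).**
For instances `v, v'` differing only in the parameter vector, with
`R_max = max_{k,i} max(|⟨φ(k,i),θ⟩|, |⟨φ(k,i),θ'⟩|)`, the KL divergence between the
joint laws of the `n` labels (computed via the chain rule as
`n·Σ_{k,i,j} N_{k,i,j}·d_KL(σ(r_{k,i}−r_{k,j}), σ(r'_{k,i}−r'_{k,j}))`) satisfies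
`(n/8)·exp(−4R_max)·D̃(v,v') ≤ D_KL ≤ 2n·exp(2R_max)·D̃(v,v')`. -/
theorem kl_divergence_between_instances (S A d : ℕ) (n : ℕ)
    (v : Inst S A d) (θ' : EuclideanSpace ℝ (Fin d))
    (hdiv : ∀ k i j, ∃ m : ℕ, (m : ℝ) = n * v.N k i j) :
    let v' : Inst S A d := { v with θ := θ' }
    let Rmax : ℝ := ⨆ k, ⨆ i, max |v.r k i| |v'.r k i|
    let DKL : ℝ := n * ∑ k, ∑ i, ∑ j,
      v.N k i j * bernKL (RLHF.sigmoid (v.r k i - v.r k j)) (RLHF.sigmoid (v'.r k i - v'.r k j))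
    (n / 8 : ℝ) * Real.exp (-4 * Rmax) * v.Dtilde θ' ≤ DKL ∧
      DKL ≤ 2 * n * Real.exp (2 * Rmax) * v.Dtilde θ' :=
  kl_divergence_between_instances_general S A d n v θ'
end

section
/- SubGaussianity of the RL-LOW relative-reward estimate: There exists a constant C > 0 depending only on L (the paper gives C = (6√(2e)·(3√(log 2)+1))²·3/(2(1−β)^4) with β = e^{2L}/(1+e^{2L})) such that for every consistent offline RLHF instance v, every n with n·N_{k,i,j} ∈ ℕ, and every (k,i) ∈ 𝒮 × 𝒜 with i ≠ i*_k, the estimate r̂_{k,i*_k,i} is subGaussian with variance proxy at most C·γ_{k,i}/n; that is, E[exp(t·(r̂_{k,i*_k,i} − E[r̂_{k,i*_k,i}]))] ≤ exp((C·γ_{k,i}/n)·t²/2) for all t ∈ ℝ. -/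
open MeasureTheory ProbabilityTheory Real

open RLHF

/-!
Write `M = n·N_{k',i',j'}`, so that the count `Y` of a sampled triple is `Bin(M, σ)` and the triple
contributes `w · logit (clip L (Y / M))` to the estimate. On `[1/(1+e^{2L}), e^{2L}/(1+e^{2L})]`
the logit is `2(1+e^{2L})`-Lipschitz, so one more success moves this contribution by at most
`K |w| / M` with `K = 2(1+e^{2L})`. Peeling off one Bernoulli trial at a time, Hoeffding's lemma
for a two-point law turns these bounded differences into a sub-Gaussian bound with variance
proxy `M (K |w| / M)² / 4 = (1+e^{2L})² w² / (n N)`. The contributions are independent, so the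
proxies add up to `(1+e^{2L})² γ / n`, where `γ` is the cost of the weights for `(i*_k, i)`; it
equals the cost for `(i, i*_k)` because negating a feasible weight vector swaps the pair.
-/

open scoped NNReal unitInterval

namespace ProbabilityTheory

lemma two_point_hoeffding (p : I) (a b s : ℝ) :
    p * exp (s * a) + (1 - p) * exp (s * b) ≤
      exp (s * (p * a + (1 - p) * b) + (a - b) ^ 2 * s ^ 2 / 8) := by
  have hsupp : ∀ᵐ x ∂Ber(a, b, p), x ∈ Set.Icc (min a b) (max a b) :=
    ae_iff.2 <| bernoulliMeasure_apply_of_notMem_of_notMem p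
      measurableSet_Icc.compl (by simp) (by simp)
  have hoeffding := (hasSubgaussianMGF_of_mem_Icc aemeasurable_id hsupp).mgf_le s
  simp only [mgf, id, integral_bernoulliMeasure, smul_eq_mul, max_sub_min_eq_abs'] at hoeffding
  set m := (p : ℝ) * a + (1 - p) * b
  have hparam : ((‖|a - b|‖₊ / 2) ^ 2 : ℝ≥0) = (a - b) ^ 2 / 4 := by
    norm_num [div_pow, sq_abs]
  rw [hparam] at hoeffding
  calc (p : ℝ) * exp (s * a) + (1 - p) * exp (s * b)
      = exp (s * m) * (p * exp (s * (a - m)) + (1 - p) * exp (s * (b - m))) := by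
        simp only [mul_sub, exp_sub]; field_simp
    _ ≤ exp (s * m) * exp ((a - b) ^ 2 / 4 * s ^ 2 / 2) := by gcongr
    _ = _ := by rw [← exp_add]; congr 1; ring

lemma choose_succ_mul_pow_succ (p q : ℝ) (m k : ℕ) :
    ((m + 1).choose (k + 1) : ℝ) * p ^ (k + 1) * q ^ (m + 1 - (k + 1)) =
      p * (m.choose k * p ^ k * q ^ (m - k)) +
        q * (m.choose (k + 1) * p ^ (k + 1) * q ^ (m - (k + 1))) := by
  rw [Nat.choose_succ_succ', Nat.add_sub_add_right]
  push_cast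
  rcases lt_or_ge k m with hkm | hkm
  · obtain ⟨j, rfl⟩ := Nat.exists_eq_add_of_lt hkm
    rw [show k + j + 1 - k = j + 1 by omega, show k + j + 1 - (k + 1) = j by omega]
    ring
  · rw [Nat.choose_eq_zero_of_lt (by omega : m < k + 1)]
    ring

/-- Pascal's rule, read as conditioning on the outcome of the last trial. -/
lemma integral_binomial_succ (m : ℕ) (p : I) (f : ℕ → ℝ) :
    ∫ y, f y ∂Bin(m + 1, p) = ∫ y, (p * f (y + 1) + (1 - p) * f y) ∂Bin(m, p) := by
  obtain ⟨a, ha⟩ : ∃ a : ℕ → ℝ, ∀ k, (m.choose k : ℝ) * p ^ k * (1 - p) ^ (m - k) = a k :=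
    ⟨_, fun _ ↦ rfl⟩
  have ha0 : (1 - p : ℝ) ^ m = a 0 := by simpa using ha 0
  have hshift : ∑ k ∈ Finset.range (m + 1), a k * f k =
      ∑ k ∈ Finset.range (m + 1), a (k + 1) * f (k + 1) + a 0 * f 0 := by
    rw [← Finset.sum_range_succ' (fun k ↦ a k * f k), Finset.sum_range_succ _ (m + 1),
      ← ha, Nat.choose_succ_self, Nat.cast_zero, zero_mul, zero_mul, zero_mul, add_zero]
  simp only [integral_binomial, smul_eq_mul, ← Nat.range_succ_eq_Iic,
    Finset.sum_range_succ' _ (m + 1), choose_succ_mul_pow_succ, ha]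
  simp only [Nat.choose_zero_right, pow_zero, Nat.sub_zero, Nat.cast_one, one_mul, pow_succ', ha0]
  have hl : ∀ k, (p * a k + (1 - p) * a (k + 1)) * f (k + 1) =
      p * (a k * f (k + 1)) + (1 - p) * (a (k + 1) * f (k + 1)) := fun _ ↦ by ring
  have hr : ∀ k, a k * (p * f (k + 1) + (1 - p) * f k) =
      p * (a k * f (k + 1)) + (1 - p) * (a k * f k) := fun _ ↦ by ring
  simp only [hl, hr, Finset.sum_add_distrib, ← Finset.mul_sum, hshift]
  ring

lemma integral_exp_binomial_le (p : I) {c : ℝ} (s : ℝ) (m : ℕ) {g : ℕ → ℝ}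
    (hg : ∀ y, |g (y + 1) - g y| ≤ c) :
    ∫ y, exp (s * g y) ∂Bin(m, p) ≤ exp (s * ∫ y, g y ∂Bin(m, p) + m * c ^ 2 * s ^ 2 / 8) := by
  induction m generalizing g with
  | zero => simp [binomial_zero]
  | succ m ih =>
    set h : ℕ → ℝ := fun y ↦ p * g (y + 1) + (1 - p) * g y
    have hh : ∀ y, |h (y + 1) - h y| ≤ c := fun y ↦ by
      have := unitInterval.nonneg p; have := unitInterval.le_one p
      rcases abs_le.1 (hg y) with ⟨h1, h2⟩
      rcases abs_le.1 (hg (y + 1)) with ⟨h3, h4⟩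
      exact abs_le.2 ⟨by nlinarith, by nlinarith⟩
    have hmean : ∫ y, g y ∂Bin(m + 1, p) = ∫ y, h y ∂Bin(m, p) := integral_binomial_succ m p g
    have hstep : ∀ y, p * exp (s * g (y + 1)) + (1 - p) * exp (s * g y) ≤
        exp (c ^ 2 * s ^ 2 / 8) * exp (s * h y) := fun y ↦ by
      rw [← exp_add]
      refine (two_point_hoeffding p _ _ s).trans (exp_le_exp.2 ?_)
      have : (g (y + 1) - g y) ^ 2 ≤ c ^ 2 := sq_le_sq' (abs_le.1 (hg y)).1 (abs_le.1 (hg y)).2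
      nlinarith [sq_nonneg s]
    calc ∫ y, exp (s * g y) ∂Bin(m + 1, p)
        ≤ ∫ y, exp (c ^ 2 * s ^ 2 / 8) * exp (s * h y) ∂Bin(m, p) := by
          rw [integral_binomial_succ]
          exact integral_mono (integrable_binomial _) (integrable_binomial _) hstep
      _ ≤ exp (c ^ 2 * s ^ 2 / 8) * exp (s * ∫ y, h y ∂Bin(m, p) + m * c ^ 2 * s ^ 2 / 8) := by
          rw [integral_const_mul]
          gcongr
          exact ih hh
      _ = exp (s * ∫ y, g y ∂Bin(m + 1, p) + (m + 1 : ℕ) * c ^ 2 * s ^ 2 / 8) := by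
          rw [← exp_add, hmean]
          push_cast
          congr 1
          ring

lemma hasSubgaussianMGF_binomial (p : I) (m : ℕ) {c : ℝ≥0} {g : ℕ → ℝ}
    (hg : ∀ y, |g (y + 1) - g y| ≤ c) :
    HasSubgaussianMGF (fun y ↦ g y - ∫ z, g z ∂Bin(m, p)) (m * c ^ 2 / 4) Bin(m, p) where
  integrable_exp_mul _ := integrable_binomial _
  mgf_le t := by
    have hmgf : mgf (fun y ↦ g y - ∫ z, g z ∂Bin(m, p)) Bin(m, p) t =
        exp (-(t * ∫ z, g z ∂Bin(m, p))) * ∫ y, exp (t * g y) ∂Bin(m, p) := by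
      rw [mgf, ← integral_const_mul]
      congr with y
      dsimp only
      rw [← exp_add]
      congr 1
      ring
    rw [hmgf, ← le_div_iff₀' (exp_pos _), div_eq_mul_inv, ← exp_neg, ← exp_add]
    refine (integral_exp_binomial_le p t m hg).trans_eq ?_
    push_cast
    congr 1
    ring

theorem hasSubgaussianMGF_sum_mul_comp_div {ι Ω : Type*} [Fintype ι] [MeasurableSpace Ω]
    {P : Measure Ω} {Y : ι → Ω → ℕ} {M : ι → ℕ} {p : ι → I} (hY : ∀ τ, Measurable (Y τ))
    (hlaw : ∀ τ, P.map (Y τ) = Bin(M τ, p τ)) (hindep : iIndepFun (fun τ ω ↦ (Y τ ω : ℝ)) P)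
    {f : ℝ → ℝ} {K : ℝ≥0} (hf : LipschitzWith K f) (u : ι → ℝ) :
    HasSubgaussianMGF
      (fun ω ↦ ∑ τ, u τ * f (Y τ ω / M τ) - ∫ ω', ∑ τ, u τ * f (Y τ ω' / M τ) ∂P)
      (∑ τ, ‖u τ‖₊ ^ 2 * K ^ 2 / (4 * M τ)) P := by
  have hintegrable τ : Integrable (fun ω ↦ u τ * f (Y τ ω / M τ)) P :=
    ((hlaw τ).symm ▸ integrable_binomial fun y : ℕ ↦ u τ * f (y / M τ)).comp_measurable (hY τ)
  have hterm τ : HasSubgaussianMGF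
      (fun ω ↦ u τ * f (Y τ ω / M τ) - ∫ ω', u τ * f (Y τ ω' / M τ) ∂P)
      (‖u τ‖₊ ^ 2 * K ^ 2 / (4 * M τ)) P := by
    have hdiff (y : ℕ) : |u τ * f ((y + 1 : ℕ) / M τ) - u τ * f (y / M τ)| ≤
        (‖u τ‖₊ * (K / M τ) : ℝ≥0) := by
      have hstep : dist ((y + 1 : ℕ) / M τ : ℝ) (y / M τ) = 1 / M τ := by
        rw [dist_eq, ← sub_div, Nat.cast_succ, add_sub_cancel_left, abs_div, abs_one, Nat.abs_cast]
      calc |u τ * f ((y + 1 : ℕ) / M τ) - u τ * f (y / M τ)|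
          = ‖u τ‖ * dist (f ((y + 1 : ℕ) / M τ)) (f (y / M τ)) := by
            rw [← mul_sub, abs_mul, dist_eq, Real.norm_eq_abs]
        _ ≤ ‖u τ‖ * (K * (1 / M τ)) := by
            rw [← hstep]; gcongr; exact hf.dist_le_mul _ _
        _ = (‖u τ‖₊ * (K / M τ) : ℝ≥0) := by push_cast; ring
    have hparam : (M τ * (‖u τ‖₊ * (K / M τ)) ^ 2 / 4 : ℝ≥0) = ‖u τ‖₊ ^ 2 * K ^ 2 / (4 * M τ) := by
      rcases eq_or_ne (M τ : ℝ≥0) 0 with h0 | h0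
      · simp [h0]
      · field_simp
    have hbin := hasSubgaussianMGF_binomial (p τ) (M τ)
      (g := fun y : ℕ ↦ u τ * f (y / M τ)) hdiff
    rw [hparam, ← hlaw τ] at hbin
    refine (hbin.of_map (hY τ).aemeasurable).congr (ae_of_all _ fun ω ↦ ?_)
    simp only [Function.comp_apply, integral_map (hY τ).aemeasurable .of_discrete]
  have hsum := HasSubgaussianMGF.sum_of_iIndepFun
    (hindep.comp (fun τ x ↦ u τ * f (x / M τ) - ∫ ω', u τ * f (Y τ ω' / M τ) ∂P) fun τ ↦ by
      have := hf.continuous.measurable; fun_prop) (s := Finset.univ) fun τ _ ↦ hterm τ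
  refine hsum.congr (ae_of_all _ fun ω ↦ ?_)
  simp only [integral_finsetSum _ fun τ _ ↦ hintegrable τ, ← Finset.sum_sub_distrib,
    Function.comp_apply]

end ProbabilityTheory

lemma abs_log_sub_log_le {α x y : ℝ} (hα : 0 < α) (hx : α ≤ x) (hy : α ≤ y) :
    |log x - log y| ≤ |x - y| / α := by
  wlog hyx : y ≤ x generalizing x y
  · rw [abs_sub_comm, abs_sub_comm x]
    exact this hy hx (le_of_not_ge hyx)
  have hx0 : 0 < x := hα.trans_le hx
  have hy0 : 0 < y := hα.trans_le hy
  rw [abs_of_nonneg (sub_nonneg.2 (log_le_log hy0 hyx)), abs_of_nonneg (sub_nonneg.2 hyx),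
    ← log_div hx0.ne' hy0.ne']
  calc log (x / y) ≤ x / y - 1 := log_le_sub_one_of_pos (by positivity)
    _ = (x - y) / y := by field_simp
    _ ≤ (x - y) / α := div_le_div_of_nonneg_left (by linarith) hα hy

namespace RLHF

lemma abs_logit_sub_logit_le_s18 {α x y : ℝ} (hα : 0 < α) (hx : x ∈ Set.Icc α (1 - α))
    (hy : y ∈ Set.Icc α (1 - α)) : |logit x - logit y| ≤ 2 / α * |x - y| := by
  obtain ⟨hx1, hx2⟩ := hx
  obtain ⟨hy1, hy2⟩ := hy
  have hlogit : ∀ z, α ≤ z → z ≤ 1 - α → logit z = log z - log (1 - z) := fun z h1 h2 ↦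
    log_div (hα.trans_le h1).ne' (hα.trans_le (by linarith)).ne'
  have h1 := abs_log_sub_log_le hα hx1 hy1
  have h2 := abs_log_sub_log_le hα (by linarith : α ≤ 1 - x) (by linarith : α ≤ 1 - y)
  rw [show 1 - x - (1 - y) = -(x - y) by ring, abs_neg] at h2
  calc |logit x - logit y| = |(log x - log y) - (log (1 - x) - log (1 - y))| := by
        rw [hlogit x hx1 hx2, hlogit y hy1 hy2]; ring_nf
    _ ≤ |log x - log y| + |log (1 - x) - log (1 - y)| := abs_sub _ _
    _ ≤ 2 / α * |x - y| := by linarith [show 2 / α * |x - y| = 2 * (|x - y| / α) by ring]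

lemma clip_mem_Icc {L : ℝ} (hL : 0 ≤ L) (x : ℝ) :
    clip L x ∈ Set.Icc (1 / (1 + exp (2 * L))) (1 - 1 / (1 + exp (2 * L))) := by
  have hβ : exp (2 * L) / (1 + exp (2 * L)) = 1 - 1 / (1 + exp (2 * L)) := by
    field_simp; ring
  have hαβ : 1 / (1 + exp (2 * L)) ≤ exp (2 * L) / (1 + exp (2 * L)) := by
    gcongr; exact one_le_exp (by linarith)
  rw [← hβ]
  exact ⟨le_max_left _ _, max_le hαβ (min_le_left _ _)⟩

lemma lipschitzWith_logit_clip {L : ℝ} (hL : 0 ≤ L) :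
    LipschitzWith (2 * (1 + exp (2 * L))).toNNReal fun x ↦ logit (clip L x) := by
  have hclip : LipschitzWith 1 (clip L) := (LipschitzWith.id.const_min _).const_max _
  refine LipschitzWith.of_dist_le_mul fun x y ↦ ?_
  rw [Real.coe_toNNReal _ (by positivity)]
  have hα : 0 < 1 / (1 + exp (2 * L)) := by positivity
  calc |logit (clip L x) - logit (clip L y)|
      ≤ 2 / (1 / (1 + exp (2 * L))) * |clip L x - clip L y| :=
        abs_logit_sub_logit_le_s18 hα (clip_mem_Icc hL x) (clip_mem_Icc hL y)
    _ ≤ 2 * (1 + exp (2 * L)) * |x - y| := by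
        rw [div_div_eq_mul_div, div_one]
        exact mul_le_mul_of_nonneg_left (by simpa [dist_eq] using hclip.dist_le_mul x y)
          (by positivity)

end RLHF

namespace RLHF.Inst

variable {S A d : ℕ}

abbrev SampledTriple (v : Inst S A d) : Type :=
  {t : Fin S × Fin A × Fin A // 0 < v.N t.1 t.2.1 t.2.2}

lemma sum_eq_sum_sampled (v : Inst S A d) {F : Fin S → Fin A → Fin A → ℝ}
    (hF : ∀ k i j, v.N k i j = 0 → F k i j = 0) :
    ∑ k, ∑ i, ∑ j, F k i j = ∑ τ : v.SampledTriple, F τ.1.1 τ.1.2.1 τ.1.2.2 := by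
  classical
  simp only [← Fintype.sum_prod_type']
  rw [← Fintype.sum_subtype_add_sum_subtype fun t : Fin S × Fin A × Fin A ↦
    0 < v.N t.1 t.2.1 t.2.2, add_eq_left]
  exact Fintype.sum_eq_zero _ fun t ↦ hF _ _ _ ((v.N_nonneg _ _ _).eq_or_lt.resolve_right t.2).symm

lemma cost_eq_sum_sampled (v : Inst S A d) (u : Fin S → Fin A → Fin A → ℝ) :
    v.cost u = ∑ τ : v.SampledTriple, u τ.1.1 τ.1.2.1 τ.1.2.2 ^ 2 / v.N τ.1.1 τ.1.2.1 τ.1.2.2 := by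
  rw [cost, sum_eq_sum_sampled v fun k i j h ↦ by simp [h]]
  exact Finset.sum_congr rfl fun τ _ ↦ if_pos τ.2

lemma rhat_eq_sum_sampled (v : Inst S A d) {L : ℝ} {n : ℕ}
    {w : Fin S → Fin A → Fin A → Fin S → Fin A → Fin A → ℝ} {k : Fin S} {i j : Fin A}
    (hij : i ≠ j) (hw : ∀ k' i' j', v.N k' i' j' = 0 → w k i j k' i' j' = 0)
    (y : Fin S → Fin A → Fin A → ℕ) :
    v.rhat L n w y k i j = ∑ τ : v.SampledTriple, w k i j τ.1.1 τ.1.2.1 τ.1.2.2 *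
      logit (clip L (y τ.1.1 τ.1.2.1 τ.1.2.2 / (n * v.N τ.1.1 τ.1.2.1 τ.1.2.2))) := by
  rw [rhat, if_neg hij, sum_eq_sum_sampled v fun k' i' j' h ↦ by simp [hw k' i' j' h]]
  exact Finset.sum_congr rfl fun τ _ ↦ by rw [B, if_pos τ.2]

lemma Feasible.neg {v : Inst S A d} {k : Fin S} {i j : Fin A} {u : Fin S → Fin A → Fin A → ℝ}
    (h : v.Feasible k i j u) : v.Feasible k j i (-u) := by
  refine ⟨fun k' i' j' hN ↦ by simp [h.1 k' i' j' hN], ?_⟩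
  rw [← neg_sub, h.2]
  simp [Finset.sum_neg_distrib]

lemma cost_neg (v : Inst S A d) (u : Fin S → Fin A → Fin A → ℝ) : v.cost (-u) = v.cost u := by
  simp [cost]

lemma IsLOW.cost_eq_of_swap {v : Inst S A d} {k : Fin S} {i j : Fin A}
    {u u' : Fin S → Fin A → Fin A → ℝ} (h : v.IsLOW k i j u) (h' : v.IsLOW k j i u') :
    v.cost u = v.cost u' :=
  le_antisymm (v.cost_neg u' ▸ h.2 _ h'.1.neg) (v.cost_neg u ▸ h'.2 _ h.1.neg)

end RLHF.Inst

namespace RLHF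

lemma HasBinomialLaw.map_eq {Ω : Type*} [MeasurableSpace Ω] {P : Measure Ω} {Y : Ω → ℕ}
    {m : ℕ} {p : I} (hY : Measurable Y) (h : HasBinomialLaw P Y m p) : P.map Y = Bin(m, p) :=
  Measure.ext_of_singleton fun k ↦ by
    rw [Measure.map_apply hY (measurableSet_singleton k), binomial_singleton]
    exact h k

lemma coe_unitInterval_sigmoid (x : ℝ) : (unitInterval.sigmoid x : ℝ) = RLHF.sigmoid x := by
  change Real.sigmoid x = _
  rw [sigmoid, Real.sigmoid_def, exp_neg]
  field_simp
  ring

lemma IsBTLSample.map_eq_binomial {S A d : ℕ} {v : Inst S A d} {n : ℕ} {Ω : Type*}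
    [MeasurableSpace Ω] {P : Measure Ω} {Y : Fin S → Fin A → Fin A → Ω → ℕ}
    (h : IsBTLSample v n P Y) (τ : v.SampledTriple) {m : ℕ}
    (hm : (m : ℝ) = n * v.N τ.1.1 τ.1.2.1 τ.1.2.2) :
    P.map (Y τ.1.1 τ.1.2.1 τ.1.2.2) =
      Bin(m, unitInterval.sigmoid (v.r τ.1.1 τ.1.2.1 - v.r τ.1.1 τ.1.2.2)) :=
  HasBinomialLaw.map_eq (h.1 _ _ _) <| by
    rw [coe_unitInterval_sigmoid, ← Nat.ceil_natCast (R := ℝ) m, hm]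
    exact h.2.1 _ _ _ τ.2

end RLHF

/-- **SubGaussianity of the RL-LOW relative-reward estimate.**
There is a constant `C > 0` depending only on `L` such that for every consistent
instance `v`, every `n` with `n·N_{k,i,j} ∈ ℕ`, and every `(k,i)` with `i ≠ i*_k`,
the estimate `r̂_{k,i*_k,i}` is subGaussian with variance proxy at most
`C·γ_{k,i}/n`. -/
theorem rl_low_estimate_subgaussian (L : ℝ) (hL : 0 < L) :
    ∃ C : ℝ, 0 < C ∧
      ∀ (S A d : ℕ), 2 ≤ A →
      ∀ v : Inst S A d, (∀ k i, |v.r k i| ≤ L) → v.Consistent →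
      ∀ istar : Fin S → Fin A, v.BestAction istar →
      ∀ w : Fin S → Fin A → Fin A → Fin S → Fin A → Fin A → ℝ,
        (∀ k i j, i ≠ j → v.IsLOW k i j (w k i j)) →
      ∀ n : ℕ, 1 ≤ n →
        (∀ k i j, ∃ m : ℕ, (m : ℝ) = n * v.N k i j) →
        ∀ (Ω : Type) [MeasurableSpace Ω] (P : MeasureTheory.Measure Ω),
          MeasureTheory.IsProbabilityMeasure P →
        ∀ Y : Fin S → Fin A → Fin A → Ω → ℕ, IsBTLSample v n P Y →
        ∀ k : Fin S, ∀ i : Fin A, i ≠ istar k →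
        ∀ t : ℝ,
          (∫ ω, Real.exp (t *
              (v.rhat L n w (fun k' i' j' => Y k' i' j' ω) k (istar k) i -
                ∫ ω', v.rhat L n w (fun k' i' j' => Y k' i' j' ω') k (istar k) i ∂P))
            ∂P) ≤
            Real.exp ((C * v.cost (w k i (istar k)) / n) * t ^ 2 / 2) := by
  refine ⟨(1 + exp (2 * L)) ^ 2, by positivity, ?_⟩
  intro S A d _ v _ _ istar _ w hw n hn hint Ω _ P _ Y hY k i hi t
  choose M hM using hint
  have hsub := hasSubgaussianMGF_sum_mul_comp_div (fun τ : v.SampledTriple ↦ hY.1 _ _ _)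
    (fun τ ↦ hY.map_eq_binomial τ (hM _ _ _)) hY.2.2 (lipschitzWith_logit_clip hL.le)
    fun τ ↦ w k (istar k) i τ.1.1 τ.1.2.1 τ.1.2.2
  simp only [v.rhat_eq_sum_sampled (Ne.symm hi) (hw k (istar k) i (Ne.symm hi)).1.1, ← hM]
  refine (hsub.mgf_le t).trans_eq (congrArg exp ?_)
  rw [(hw k i (istar k) hi).cost_eq_of_swap (hw k (istar k) i (Ne.symm hi)),
    Inst.cost_eq_sum_sampled]
  have hn0 : (n : ℝ) ≠ 0 := by positivity
  push_cast [hM, Real.coe_toNNReal _ (by positivity : 0 ≤ 2 * (1 + exp (2 * L))),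
    Real.norm_eq_abs, sq_abs]
  simp only [Finset.mul_sum, Finset.sum_div, Finset.sum_mul]
  refine Finset.sum_congr rfl fun τ _ ↦ ?_
  have hN : v.N τ.1.1 τ.1.2.1 τ.1.2.2 ≠ 0 := τ.2.ne'
  field_simp
  ring
end
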